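/- arXiv:1908.00261 — 4 statements merged into one kernel-verified Lean document; each statement's English description precedes it below -/
import Mathlib

section
/- (Non-concavity of policy optimization) There exists a finite discounted MDP, a state s, and a discount factor γ ∈ [0,1) such that: (i) the function θ ↦ V^{π_θ}(s) on ℝ^{S×A}, where π_θ is the softmax parameterization, is not concave; and (ii) the function π ↦ V^π(s) on the product of probability simplices Δ(A)^S (direct parameterization) is not concave. In particular, non-concavity in case (i) is witnessed by parameters θ⁽¹⁾, θ⁽²⁾ with V^{π_{θ⁽¹⁾}}(s) + V^{π_{θ⁽²⁾}}(s) > 2 V^{π_{(θ⁽¹⁾+θ⁽²⁾)/2}}(s). -/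
open scoped BigOperators InnerProductSpace

/-- A finite Markov decision process (the data only: transition probabilities `P`,
rewards `r`, and discount factor `γ`). -/
structure FinMDP where
  S : Type
  A : Type
  [fS : Fintype S]
  [dS : DecidableEq S]
  [fA : Fintype A]
  [dA : DecidableEq A]
  P : S → A → S → ℝ
  r : S → A → ℝ
  γ : ℝ

attribute [instance] FinMDP.fS FinMDP.dS FinMDP.fA FinMDP.dA

/-- `μ` is a probability distribution on the finite type `X`. -/
def IsDist {X : Type*} [Fintype X] (μ : X → ℝ) : Prop :=
  (∀ x, 0 ≤ μ x) ∧ ∑ x, μ x = 1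

namespace FinMDP

variable (M : FinMDP)

/-- The MDP data is well formed: `P` is a transition kernel, rewards lie in `[0,1]`,
and `γ ∈ [0,1)`. -/
def Valid : Prop :=
  (∀ s a s', 0 ≤ M.P s a s') ∧ (∀ s a, ∑ s', M.P s a s' = 1) ∧
    (∀ s a, 0 ≤ M.r s a ∧ M.r s a ≤ 1) ∧ 0 ≤ M.γ ∧ M.γ < 1

/-- `π` is a stochastic policy: `π s a` is the probability `π(a|s)`. -/
def IsPolicy (π : M.S → M.A → ℝ) : Prop :=
  (∀ s a, 0 ≤ π s a) ∧ ∀ s, ∑ a, π s a = 1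

/-- State-to-state transition matrix induced by a policy. -/
noncomputable def Pmat (π : M.S → M.A → ℝ) : Matrix M.S M.S ℝ :=
  Matrix.of fun s s' => ∑ a, π s a * M.P s a s'

/-- Expected one-step reward under a policy. -/
noncomputable def rPol (π : M.S → M.A → ℝ) (s : M.S) : ℝ :=
  ∑ a, π s a * M.r s a

/-- The value function `V^π(s₀) = E[∑ₜ γ^t r(s_t, a_t)]`. -/
noncomputable def V (π : M.S → M.A → ℝ) (s₀ : M.S) : ℝ :=
  ∑' t : ℕ, M.γ ^ t * ((M.Pmat π ^ t).mulVec (M.rPol π)) s₀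

/-- `V^π(ρ)` for a starting state distribution `ρ`. -/
noncomputable def Vd (π : M.S → M.A → ℝ) (ρ : M.S → ℝ) : ℝ :=
  ∑ s, ρ s * M.V π s

/-- The action-value function `Q^π(s,a)`. -/
noncomputable def Qf (π : M.S → M.A → ℝ) (s : M.S) (a : M.A) : ℝ :=
  M.r s a + M.γ * ∑ s', M.P s a s' * M.V π s'

/-- The advantage function `A^π(s,a) = Q^π(s,a) - V^π(s)`. -/
noncomputable def Adv (π : M.S → M.A → ℝ) (s : M.S) (a : M.A) : ℝ :=
  M.Qf π s a - M.V π s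

/-- Discounted state visitation distribution `d^π_{s₀}(s)`. -/
noncomputable def dvisit (π : M.S → M.A → ℝ) (s₀ s : M.S) : ℝ :=
  (1 - M.γ) * ∑' t : ℕ, M.γ ^ t * (M.Pmat π ^ t) s₀ s

/-- Discounted state visitation distribution `d^π_μ(s)` for a starting distribution `μ`. -/
noncomputable def dvisitD (π : M.S → M.A → ℝ) (μ : M.S → ℝ) (s : M.S) : ℝ :=
  ∑ s₀, μ s₀ * M.dvisit π s₀ s

/-- State-action transition matrix induced by a policy. -/
noncomputable def PmatSA (π : M.S → M.A → ℝ) :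
    Matrix (M.S × M.A) (M.S × M.A) ℝ :=
  Matrix.of fun p q => M.P p.1 p.2 q.1 * π q.1 q.2

/-- Discounted state-action visitation measure `d^π_ν(s,a)` started from `(s₀,a₀) ∼ ν`,
executing `a₀` first and following `π` thereafter. -/
noncomputable def dvisitSA (π : M.S → M.A → ℝ) (ν : M.S × M.A → ℝ)
    (p : M.S × M.A) : ℝ :=
  (1 - M.γ) * ∑' t : ℕ, M.γ ^ t * ∑ p₀, ν p₀ * (M.PmatSA π ^ t) p₀ p

/-- The softmax policy `π_θ(a|s) = exp(θ_{s,a}) / ∑_{a'} exp(θ_{s,a'})`. -/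
noncomputable def softmaxPolicy (θ : EuclideanSpace ℝ (M.S × M.A)) :
    M.S → M.A → ℝ :=
  fun s a => Real.exp (θ (s, a)) / ∑ a', Real.exp (θ (s, a'))

end FinMDP

/-!
In `twoStep γ`, reward is earned only by playing action 0 in state 0 and then again in state 1,
so `V^π(0) = γ · π(0|0) · π(0|1)`, a product of two probabilities. Mixing "always 0" with
"always 1" halves both factors, so the value at the midpoint is `γ/4 < γ/2`. Under softmax each
factor is the sigmoid `σ` of a logit gap; for logits `θ` and `-θ` with gap `t` in both states,
their midpoint is `0` and `V(θ) + V(-θ) - 2 V(0) = 2γ (σ t - 1/2)² > 0`.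
-/

theorem not_concaveOn_of_lt_midpoint {𝕜 E : Type*} [Field 𝕜] [LinearOrder 𝕜]
    [IsStrictOrderedRing 𝕜] [AddCommGroup E] [Module 𝕜 E] {s : Set E} {f : E → 𝕜} {x y : E}
    (hx : x ∈ s) (hy : y ∈ s) (h : 2 * f ((2 : 𝕜)⁻¹ • (x + y)) < f x + f y) :
    ¬ ConcaveOn 𝕜 s f := by
  intro hf
  have hmid := hf.2 hx hy (inv_nonneg.2 zero_le_two) (inv_nonneg.2 zero_le_two) (by norm_num)
  rw [smul_eq_mul, smul_eq_mul, ← smul_add] at hmid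
  linarith

open Matrix

namespace FinMDP

theorem isPolicy_pi_single (M : FinMDP) (a : M.A) : M.IsPolicy fun _ => Pi.single a 1 :=
  ⟨fun _ b => by by_cases h : b = a <;> simp [h], fun _ => by simp⟩

abbrev twoStep (γ : ℝ) : FinMDP where
  S := Fin 3
  A := Fin 2
  P s a s' := if s = 0 ∧ a = 0 then (if s' = 1 then 1 else 0) else if s' = 2 then 1 else 0
  r s a := if s = 1 ∧ a = 0 then 1 else 0
  γ := γ

def actionZeroBonus (t : ℝ) : EuclideanSpace ℝ (Fin 3 × Fin 2) :=
  WithLp.toLp 2 fun p => if p.2 = 0 then t else 0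

section TwoStep

variable (γ : ℝ)

theorem twoStep_valid (hγ₀ : 0 ≤ γ) (hγ₁ : γ < 1) : (twoStep γ).Valid := by
  refine ⟨fun s a s' => ?_, fun s a => ?_, fun s a => ?_, hγ₀, hγ₁⟩
  · dsimp only; split_ifs <;> norm_num
  · fin_cases s <;> fin_cases a <;> simp
  · dsimp only; split_ifs <;> norm_num

theorem twoStep_rPol (π : Fin 3 → Fin 2 → ℝ) : (twoStep γ).rPol π = Pi.single 1 (π 1 0) := by
  funext s; fin_cases s <;> simp [rPol]

theorem twoStep_Pmat_col_zero (π : Fin 3 → Fin 2 → ℝ) (s : Fin 3) :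
    (twoStep γ).Pmat π s 0 = 0 := by
  fin_cases s <;> simp [Pmat, Fin.sum_univ_two]

theorem twoStep_Pmat_col_one (π : Fin 3 → Fin 2 → ℝ) (s : Fin 3) :
    (twoStep γ).Pmat π s 1 = if s = 0 then π 0 0 else 0 := by
  fin_cases s <;> simp [Pmat, Fin.sum_univ_two]

theorem twoStep_pow_mulVec_rPol_zero (π : Fin 3 → Fin 2 → ℝ) (t : ℕ) :
    ((twoStep γ).Pmat π ^ t *ᵥ (twoStep γ).rPol π) 0 =
      if t = 1 then π 0 0 * π 1 0 else 0 := by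
  have hstep : (twoStep γ).Pmat π *ᵥ (twoStep γ).rPol π = Pi.single 0 (π 0 0 * π 1 0) := by
    funext s
    rw [twoStep_rPol, mulVec_single]
    fin_cases s <;> simp [twoStep_Pmat_col_one]
  have hvanish : (twoStep γ).Pmat π *ᵥ Pi.single 0 (π 0 0 * π 1 0) = 0 := by
    funext s
    simp [twoStep_Pmat_col_zero]
  match t with
  | 0 => simp [twoStep_rPol]
  | 1 => simp [hstep]
  | t + 2 =>
    rw [pow_succ, pow_succ, ← mulVec_mulVec, ← mulVec_mulVec, hstep, hvanish, mulVec_zero]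
    simp

theorem twoStep_V_zero (π : Fin 3 → Fin 2 → ℝ) : (twoStep γ).V π 0 = γ * (π 0 0 * π 1 0) := by
  rw [V, tsum_eq_single 1 fun t ht => by rw [twoStep_pow_mulVec_rPol_zero, if_neg ht, mul_zero]]
  rw [twoStep_pow_mulVec_rPol_zero, if_pos rfl, pow_one]

theorem twoStep_softmaxPolicy_zero (θ : EuclideanSpace ℝ (Fin 3 × Fin 2)) (s : Fin 3) :
    (twoStep γ).softmaxPolicy θ s 0 = Real.sigmoid (θ (s, 0) - θ (s, 1)) := by
  rw [softmaxPolicy, Fin.sum_univ_two, Real.sigmoid_def, Real.exp_neg, Real.exp_sub]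
  field_simp

theorem twoStep_V_softmaxPolicy_actionZeroBonus (t : ℝ) :
    (twoStep γ).V ((twoStep γ).softmaxPolicy (actionZeroBonus t)) 0 =
      γ * Real.sigmoid t ^ 2 := by
  rw [twoStep_V_zero, twoStep_softmaxPolicy_zero, twoStep_softmaxPolicy_zero]
  simp [actionZeroBonus, sq]

theorem twoStep_softmax_midpoint_gap (hγ : 0 < γ) {t : ℝ} (ht : t ≠ 0) :
    2 * (twoStep γ).V ((twoStep γ).softmaxPolicy
        ((2 : ℝ)⁻¹ • (actionZeroBonus t + actionZeroBonus (-t)))) 0 <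
      (twoStep γ).V ((twoStep γ).softmaxPolicy (actionZeroBonus t)) 0 +
        (twoStep γ).V ((twoStep γ).softmaxPolicy (actionZeroBonus (-t))) 0 := by
  have hmid : (2 : ℝ)⁻¹ • (actionZeroBonus t + actionZeroBonus (-t)) = actionZeroBonus 0 := by
    ext p
    by_cases h : p.2 = 0 <;> simp [actionZeroBonus, h]
  have hσ : Real.sigmoid t - 2⁻¹ ≠ 0 := by
    rwa [sub_ne_zero, ← Real.sigmoid_zero, Ne, Real.sigmoid_inj]
  simp only [hmid, twoStep_V_softmaxPolicy_actionZeroBonus, Real.sigmoid_neg, Real.sigmoid_zero]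
  nlinarith [mul_pos hγ (sq_pos_of_ne_zero hσ)]

theorem twoStep_direct_midpoint_gap (hγ : 0 < γ) :
    2 * (twoStep γ).V ((2 : ℝ)⁻¹ • ((fun _ => Pi.single 0 1) + fun _ => Pi.single 1 1)) 0 <
      (twoStep γ).V (fun _ => Pi.single 0 1) 0 + (twoStep γ).V (fun _ => Pi.single 1 1) 0 := by
  simp only [twoStep_V_zero]
  norm_num
  linarith

end TwoStep

end FinMDP

/-- **Non-concavity of policy optimization.** There is a finite discounted MDP and a
state `s` such that `θ ↦ V^{π_θ}(s)` (softmax parameterization) is not concave, the map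
`π ↦ V^π(s)` on the product of simplices (direct parameterization) is not concave, and
non-concavity of the former is witnessed by parameters `θ₁, θ₂` with
`V^{π_{θ₁}}(s) + V^{π_{θ₂}}(s) > 2 V^{π_{(θ₁+θ₂)/2}}(s)`. -/
theorem policy_value_nonconcave :
    ∃ (M : FinMDP), M.Valid ∧ ∃ s : M.S,
      (¬ ConcaveOn ℝ Set.univ
          (fun θ : EuclideanSpace ℝ (M.S × M.A) => M.V (M.softmaxPolicy θ) s)) ∧
      (¬ ConcaveOn ℝ {π : M.S → M.A → ℝ | M.IsPolicy π}
          (fun π : M.S → M.A → ℝ => M.V π s)) ∧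
      ∃ θ₁ θ₂ : EuclideanSpace ℝ (M.S × M.A),
        M.V (M.softmaxPolicy θ₁) s + M.V (M.softmaxPolicy θ₂) s >
          2 * M.V (M.softmaxPolicy ((2 : ℝ)⁻¹ • (θ₁ + θ₂))) s := by
  have hγ : (0 : ℝ) < 1 / 2 := by norm_num
  have hsoftmax := FinMDP.twoStep_softmax_midpoint_gap (1 / 2) hγ one_ne_zero
  refine ⟨FinMDP.twoStep (1 / 2), FinMDP.twoStep_valid _ hγ.le (by norm_num), 0, ?_, ?_,
    _, _, hsoftmax⟩
  · exact not_concaveOn_of_lt_midpoint (Set.mem_univ _) (Set.mem_univ _) hsoftmax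
  · exact not_concaveOn_of_lt_midpoint (FinMDP.isPolicy_pi_single (FinMDP.twoStep (1 / 2)) 0)
      (FinMDP.isPolicy_pi_single (FinMDP.twoStep (1 / 2)) 1)
      (FinMDP.twoStep_direct_midpoint_gap _ hγ)
end

section
/- (Gradient domination for the direct parameterization) For every finite discounted MDP, every policy π ∈ Δ(A)^S, and all state distributions μ, ρ on S with μ(s) > 0 for all s: V^⋆(ρ) − V^π(ρ) ≤ ‖d^{π⋆}_ρ / d^π_μ‖_∞ · G(π,μ) ≤ (1/(1−γ)) · ‖d^{π⋆}_ρ / μ‖_∞ · G(π,μ), where G(π,μ) := max_{π̄ ∈ Δ(A)^S} Σ_{s,a} (π̄(a|s) − π(a|s)) · (1/(1−γ)) d^π_μ(s) Q^π(s,a), and the ratios ‖·/·‖_∞ are componentwise maxima over states. -/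
open scoped BigOperators InnerProductSpace

/-!
Performance difference lemma: `V^{π⋆}(ρ) - V^π(ρ) = (1-γ)⁻¹ ∑ₛ d^{π⋆}_ρ(s) ∑ₐ π⋆(a|s) A^π(s,a)`.
At each state the inner sum is at most `∑ₐ π̄(a|s) A^π(s,a) ≥ 0` for a policy `π̄` greedy with
respect to `Q^π`. Bounding `d^{π⋆}_ρ(s)` by `‖d^{π⋆}_ρ / d^π_μ‖_∞ · d^π_μ(s)` leaves exactly the
directional derivative of `V^π(μ)` towards `π̄`, and `π̄` realizes the maximum `G(π, μ)`.
The second bound follows from `d^π_μ ≥ (1-γ) μ`.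

Writing values and visitation distributions through the resolvent `∑ₜ γᵗ Pᵗ = (1 - γP)⁻¹` of the
state transition matrix makes the performance difference lemma a matrix identity.
-/

open Finset Matrix

namespace Matrix

variable {n : Type*} [Fintype n] [DecidableEq n]

/-- Defined entrywise, so that `FinMDP.dvisit` unfolds to a multiple of it. -/
noncomputable def discountedSum (P : Matrix n n ℝ) (γ : ℝ) : Matrix n n ℝ :=
  of fun i j => ∑' t : ℕ, γ ^ t * (P ^ t) i j

variable {P : Matrix n n ℝ} {γ : ℝ}

lemma discountedSum_nonneg (hP : P ∈ rowStochastic ℝ n) (hγ₀ : 0 ≤ γ) (i j : n) :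
    0 ≤ discountedSum P γ i j :=
  tsum_nonneg fun t => mul_nonneg (pow_nonneg hγ₀ t) (nonneg_of_mem_rowStochastic (pow_mem hP t))

section

variable (hP : P ∈ rowStochastic ℝ n) (hγ₀ : 0 ≤ γ) (hγ₁ : γ < 1)
include hP hγ₀ hγ₁

lemma summable_discountedSum_apply (i j : n) : Summable fun t : ℕ => γ ^ t * (P ^ t) i j :=
  (summable_geometric_of_lt_one hγ₀ hγ₁).of_nonneg_of_le
    (fun t => mul_nonneg (pow_nonneg hγ₀ t) (nonneg_of_mem_rowStochastic (pow_mem hP t)))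
    (fun t => mul_le_of_le_one_right (pow_nonneg hγ₀ t)
      (le_one_of_mem_rowStochastic (pow_mem hP t)))

lemma hasSum_discountedSum : HasSum (fun t : ℕ => (γ • P) ^ t) (discountedSum P γ) := by
  refine Pi.hasSum.2 fun i => Pi.hasSum.2 fun j => ?_
  simpa only [smul_pow, smul_apply, smul_eq_mul, discountedSum, of_apply] using
    (summable_discountedSum_apply hP hγ₀ hγ₁ i j).hasSum

lemma discountedSum_mul_one_sub : discountedSum P γ * (1 - γ • P) = 1 := by
  rw [← (hasSum_discountedSum hP hγ₀ hγ₁).tsum_eq]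
  exact (hasSum_discountedSum hP hγ₀ hγ₁).summable.tsum_pow_mul_one_sub

lemma one_sub_mul_discountedSum : (1 - γ • P) * discountedSum P γ = 1 := by
  rw [← (hasSum_discountedSum hP hγ₀ hγ₁).tsum_eq]
  exact (hasSum_discountedSum hP hγ₀ hγ₁).summable.one_sub_mul_tsum_pow

lemma discountedSum_mulVec (v : n → ℝ) (i : n) :
    (discountedSum P γ *ᵥ v) i = ∑' t : ℕ, γ ^ t * (P ^ t *ᵥ v) i := by
  simp only [discountedSum, mulVec, dotProduct, of_apply, mul_sum, ← mul_assoc, ← tsum_mul_right]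
  exact (Summable.tsum_finsetSum fun j _ =>
    (summable_discountedSum_apply hP hγ₀ hγ₁ i j).mul_right (v j)).symm

lemma one_le_discountedSum_self (i : n) : 1 ≤ discountedSum P γ i i := by
  simpa [discountedSum] using (summable_discountedSum_apply hP hγ₀ hγ₁ i i).le_tsum 0 fun t _ =>
    mul_nonneg (pow_nonneg hγ₀ t) (nonneg_of_mem_rowStochastic (pow_mem hP t))

end

end Matrix

namespace FinMDP

variable {M : FinMDP} {π π' g : M.S → M.A → ℝ}

lemma Valid.discount_nonneg (hM : M.Valid) : 0 ≤ M.γ := hM.2.2.2.1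

lemma Valid.discount_lt_one (hM : M.Valid) : M.γ < 1 := hM.2.2.2.2

lemma Pmat_mem_rowStochastic (hM : M.Valid) (hπ : M.IsPolicy π) :
    M.Pmat π ∈ rowStochastic ℝ M.S := by
  refine mem_rowStochastic_iff_sum.2
    ⟨fun s s' => sum_nonneg fun a _ => mul_nonneg (hπ.1 s a) (hM.1 s a s'), fun s => ?_⟩
  simp only [Pmat, of_apply]
  rw [sum_comm]
  simp [← mul_sum, hM.2.1, hπ.2 s]

lemma V_eq_discountedSum_mulVec (hM : M.Valid) (hπ : M.IsPolicy π) :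
    M.V π = (M.Pmat π).discountedSum M.γ *ᵥ M.rPol π :=
  funext fun s => (discountedSum_mulVec (Pmat_mem_rowStochastic hM hπ) hM.discount_nonneg
    hM.discount_lt_one _ s).symm

lemma dvisitD_eq_vecMul (μ : M.S → ℝ) :
    M.dvisitD π μ = (1 - M.γ) • (μ ᵥ* (M.Pmat π).discountedSum M.γ) := by
  ext s
  simp only [dvisitD, dvisit, vecMul, dotProduct, discountedSum, of_apply, Pi.smul_apply,
    smul_eq_mul, mul_sum]
  exact sum_congr rfl fun _ _ => by ring

lemma dvisitD_nonneg (hM : M.Valid) (hπ : M.IsPolicy π) {μ : M.S → ℝ} (hμ : ∀ s, 0 ≤ μ s)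
    (s : M.S) : 0 ≤ M.dvisitD π μ s := by
  rw [dvisitD_eq_vecMul, Pi.smul_apply, smul_eq_mul]
  have hN := discountedSum_nonneg (Pmat_mem_rowStochastic hM hπ) hM.discount_nonneg
  exact mul_nonneg (sub_nonneg.2 hM.discount_lt_one.le)
    (sum_nonneg fun s₀ _ => mul_nonneg (hμ s₀) (hN s₀ s))

lemma le_dvisitD (hM : M.Valid) (hπ : M.IsPolicy π) {μ : M.S → ℝ} (hμ : ∀ s, 0 ≤ μ s) (s : M.S) :
    (1 - M.γ) * μ s ≤ M.dvisitD π μ s := by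
  have hP := Pmat_mem_rowStochastic hM hπ
  rw [dvisitD_eq_vecMul, Pi.smul_apply, smul_eq_mul]
  refine mul_le_mul_of_nonneg_left ?_ (sub_nonneg.2 hM.discount_lt_one.le)
  calc μ s ≤ μ s * (M.Pmat π).discountedSum M.γ s s :=
        le_mul_of_one_le_right (hμ s)
          (one_le_discountedSum_self hP hM.discount_nonneg hM.discount_lt_one s)
    _ ≤ (μ ᵥ* (M.Pmat π).discountedSum M.γ) s :=
        single_le_sum (f := fun s₀ => μ s₀ * _)
          (fun s₀ _ => mul_nonneg (hμ s₀) (discountedSum_nonneg hP hM.discount_nonneg s₀ s))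
          (mem_univ s)

lemma dvisitD_pos (hM : M.Valid) (hπ : M.IsPolicy π) {μ : M.S → ℝ} (hμ : ∀ s, 0 < μ s)
    (s : M.S) : 0 < M.dvisitD π μ s :=
  (mul_pos (sub_pos.2 hM.discount_lt_one) (hμ s)).trans_le
    (le_dvisitD hM hπ (fun s => (hμ s).le) s)

lemma div_dvisitD_le (hM : M.Valid) (hπ : M.IsPolicy π) {μ : M.S → ℝ} (hμ : ∀ s, 0 < μ s)
    {x : ℝ} (hx : 0 ≤ x) (s : M.S) : x / M.dvisitD π μ s ≤ 1 / (1 - M.γ) * (x / μ s) := by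
  have hγ := sub_pos.2 hM.discount_lt_one
  calc x / M.dvisitD π μ s ≤ x / ((1 - M.γ) * μ s) :=
        div_le_div_of_nonneg_left hx (mul_pos hγ (hμ s)) (le_dvisitD hM hπ (fun s => (hμ s).le) s)
    _ = 1 / (1 - M.γ) * (x / μ s) := by field_simp

lemma sum_mul_Qf (s : M.S) :
    ∑ a, π' s a * M.Qf π s a = M.rPol π' s + M.γ * (M.Pmat π' *ᵥ M.V π) s := by
  simp only [Qf, rPol, Pmat, mulVec, dotProduct, of_apply, mul_add, mul_sum, sum_mul,
    sum_add_distrib]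
  rw [sum_comm (f := fun s' a => _)]
  simp only [mul_left_comm, mul_assoc]

lemma V_bellman (hM : M.Valid) (hπ : M.IsPolicy π) :
    M.V π = M.rPol π + M.γ • (M.Pmat π *ᵥ M.V π) := by
  have h := congrArg (· *ᵥ M.rPol π) (one_sub_mul_discountedSum
    (Pmat_mem_rowStochastic hM hπ) hM.discount_nonneg hM.discount_lt_one)
  simp only [← mulVec_mulVec, ← V_eq_discountedSum_mulVec hM hπ, one_mulVec, sub_mulVec,
    smul_mulVec] at h
  rw [← h]
  abel

lemma V_eq_sum_mul_Qf (hM : M.Valid) (hπ : M.IsPolicy π) (s : M.S) :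
    M.V π s = ∑ a, π s a * M.Qf π s a := by
  rw [sum_mul_Qf]
  nth_rw 1 [V_bellman hM hπ]
  rfl

lemma sum_mul_Adv_eq (hπ' : M.IsPolicy π') (s : M.S) :
    ∑ a, π' s a * M.Adv π s a = ∑ a, π' s a * M.Qf π s a - M.V π s := by
  simp only [Adv, mul_sub, sum_sub_distrib, ← sum_mul, hπ'.2 s, one_mul]

lemma Vd_sub_Vd_eq (hM : M.Valid) (hπ' : M.IsPolicy π') (ρ : M.S → ℝ) :
    M.Vd π' ρ - M.Vd π ρ =
      1 / (1 - M.γ) * ∑ s, M.dvisitD π' ρ s * ∑ a, π' s a * M.Adv π s a := by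
  set N := (M.Pmat π').discountedSum M.γ
  set f : M.S → ℝ := fun s => ∑ a, π' s a * M.Adv π s a
  have hf : f = M.rPol π' - (1 - M.γ • M.Pmat π') *ᵥ M.V π := by
    ext s
    simp only [f, sum_mul_Adv_eq hπ', sum_mul_Qf, Pi.sub_apply, sub_mulVec, one_mulVec,
      smul_mulVec, Pi.smul_apply, smul_eq_mul]
    ring
  have hNf : N *ᵥ f = M.V π' - M.V π := by
    rw [hf, mulVec_sub, mulVec_mulVec, discountedSum_mul_one_sub (Pmat_mem_rowStochastic hM hπ')
      hM.discount_nonneg hM.discount_lt_one, one_mulVec, ← V_eq_discountedSum_mulVec hM hπ']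
  have hγ : 1 - M.γ ≠ 0 := (sub_pos.2 hM.discount_lt_one).ne'
  calc M.Vd π' ρ - M.Vd π ρ = ρ ⬝ᵥ (N *ᵥ f) := by
        rw [hNf, dotProduct_sub]
        rfl
    _ = 1 / (1 - M.γ) * (M.dvisitD π' ρ ⬝ᵥ f) := by
        rw [dvisitD_eq_vecMul, smul_dotProduct, dotProduct_mulVec, smul_eq_mul, one_div,
          inv_mul_cancel_left₀ hγ]

lemma IsPolicy.sum_mul_le (hπ : M.IsPolicy π) {w : M.A → ℝ} {c : ℝ} (hw : ∀ a, w a ≤ c)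
    (s : M.S) : ∑ a, π s a * w a ≤ c :=
  calc ∑ a, π s a * w a ≤ ∑ a, π s a * c :=
        sum_le_sum fun a _ => mul_le_mul_of_nonneg_left (hw a) (hπ.1 s a)
    _ = c := by rw [← sum_mul, hπ.2 s, one_mul]

lemma IsPolicy.nonempty_action (hπ : M.IsPolicy π) (s : M.S) : Nonempty M.A := by
  by_contra h
  simpa [not_nonempty_iff.1 h] using hπ.2 s

def IsGreedy (M : FinMDP) (g w : M.S → M.A → ℝ) : Prop :=
  M.IsPolicy g ∧ ∀ p, M.IsPolicy p → ∀ s, ∑ a, p s a * w s a ≤ ∑ a, g s a * w s a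

lemma exists_isGreedy (hπ : M.IsPolicy π) (w : M.S → M.A → ℝ) : ∃ g, M.IsGreedy g w := by
  choose b hb using fun s => have := hπ.nonempty_action s; Finite.exists_max (w s)
  refine ⟨fun s a => if a = b s then 1 else 0, ⟨fun s a => by positivity, fun s => by simp⟩,
    fun p hp s => ?_⟩
  simpa only [ite_mul, one_mul, zero_mul, sum_ite_eq', mem_univ, if_true] using
    hp.sum_mul_le (hb s) s

lemma IsGreedy.sum_sub_mul_le {w : M.S → M.A → ℝ} (hg : M.IsGreedy g w) {p : M.S → M.A → ℝ}
    (hp : M.IsPolicy p) (π : M.S → M.A → ℝ) (s : M.S) :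
    ∑ a, (p s a - π s a) * w s a ≤ ∑ a, (g s a - π s a) * w s a := by
  simp only [sub_mul, sum_sub_distrib]
  linarith [hg.2 p hp s]

lemma IsGreedy.sum_sub_mul_nonneg {w : M.S → M.A → ℝ} (hg : M.IsGreedy g w)
    (hπ : M.IsPolicy π) (s : M.S) : 0 ≤ ∑ a, (g s a - π s a) * w s a := by
  simpa using hg.sum_sub_mul_le hπ π s

/-- `G(π, μ) = max_π̄ ⟪π̄ - π, ∇_π V^π(μ)⟫`, the gradient being `(1-γ)⁻¹ d^π_μ(s) Q^π(s,a)`. -/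
noncomputable def gradGap (M : FinMDP) (π : M.S → M.A → ℝ) (μ : M.S → ℝ) : ℝ :=
  ⨆ pb : {p : M.S → M.A → ℝ // M.IsPolicy p},
    ∑ s, ∑ a, (pb.1 s a - π s a) * ((1 / (1 - M.γ)) * M.dvisitD π μ s * M.Qf π s a)

lemma gradGap_eq (hM : M.Valid) (hπ : M.IsPolicy π) {μ : M.S → ℝ} (hμ : ∀ s, 0 ≤ μ s)
    (hg : M.IsGreedy g (M.Qf π)) :
    M.gradGap π μ = 1 / (1 - M.γ) * ∑ s, M.dvisitD π μ s * ∑ a, (g s a - π s a) * M.Qf π s a := by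
  have hsum (p : M.S → M.A → ℝ) :
      ∑ s, ∑ a, (p s a - π s a) * (1 / (1 - M.γ) * M.dvisitD π μ s * M.Qf π s a) =
        1 / (1 - M.γ) * ∑ s, M.dvisitD π μ s * ∑ a, (p s a - π s a) * M.Qf π s a := by
    simp only [mul_sum]
    exact sum_congr rfl fun _ _ => sum_congr rfl fun _ _ => by ring
  have hle (p : {p : M.S → M.A → ℝ // M.IsPolicy p}) :
      ∑ s, ∑ a, (p.1 s a - π s a) * (1 / (1 - M.γ) * M.dvisitD π μ s * M.Qf π s a) ≤
        1 / (1 - M.γ) * ∑ s, M.dvisitD π μ s * ∑ a, (g s a - π s a) * M.Qf π s a := by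
    have hγ := sub_nonneg.2 hM.discount_lt_one.le
    rw [hsum]
    exact mul_le_mul_of_nonneg_left (sum_le_sum fun s _ => mul_le_mul_of_nonneg_left
      (hg.sum_sub_mul_le p.2 π s) (dvisitD_nonneg hM hπ hμ s)) (by positivity)
  have : Nonempty {p : M.S → M.A → ℝ // M.IsPolicy p} := ⟨⟨π, hπ⟩⟩
  refine le_antisymm (ciSup_le hle) ?_
  rw [← hsum]
  exact le_ciSup (f := fun p : {p // M.IsPolicy p} => ∑ s, ∑ a, (p.1 s a - π s a) * _)
    ⟨_, Set.forall_mem_range.2 hle⟩ ⟨g, hg.1⟩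

lemma gradGap_nonneg (hM : M.Valid) (hπ : M.IsPolicy π) {μ : M.S → ℝ} (hμ : ∀ s, 0 ≤ μ s) :
    0 ≤ M.gradGap π μ := by
  obtain ⟨g, hg⟩ := exists_isGreedy hπ (M.Qf π)
  have hγ := sub_nonneg.2 hM.discount_lt_one.le
  rw [gradGap_eq hM hπ hμ hg]
  exact mul_nonneg (by positivity) (sum_nonneg fun s _ =>
    mul_nonneg (dvisitD_nonneg hM hπ hμ s) (hg.sum_sub_mul_nonneg hπ s))

lemma Vd_sub_Vd_le_mul_gradGap (hM : M.Valid) (hπ : M.IsPolicy π) (hπ' : M.IsPolicy π')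
    {μ ρ : M.S → ℝ} (hμ : ∀ s, 0 ≤ μ s) (hρ : ∀ s, 0 ≤ ρ s) {K : ℝ}
    (hK : ∀ s, M.dvisitD π' ρ s ≤ K * M.dvisitD π μ s) :
    M.Vd π' ρ - M.Vd π ρ ≤ K * M.gradGap π μ := by
  obtain ⟨g, hg⟩ := exists_isGreedy hπ (M.Qf π)
  have hadv (s : M.S) : ∑ a, π' s a * M.Adv π s a ≤ ∑ a, (g s a - π s a) * M.Qf π s a := by
    rw [sum_mul_Adv_eq hπ', V_eq_sum_mul_Qf hM hπ, ← sum_sub_distrib]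
    simpa only [sub_mul] using hg.sum_sub_mul_le hπ' π s
  have hγ := sub_nonneg.2 hM.discount_lt_one.le
  rw [Vd_sub_Vd_eq hM hπ' ρ, gradGap_eq hM hπ hμ hg, mul_left_comm K, mul_sum _ _ K]
  refine mul_le_mul_of_nonneg_left (sum_le_sum fun s _ => ?_) (by positivity)
  calc M.dvisitD π' ρ s * ∑ a, π' s a * M.Adv π s a
      ≤ M.dvisitD π' ρ s * ∑ a, (g s a - π s a) * M.Qf π s a :=
        mul_le_mul_of_nonneg_left (hadv s) (dvisitD_nonneg hM hπ' hρ s)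
    _ ≤ K * M.dvisitD π μ s * ∑ a, (g s a - π s a) * M.Qf π s a :=
        mul_le_mul_of_nonneg_right (hK s) (hg.sum_sub_mul_nonneg hπ s)
    _ = K * (M.dvisitD π μ s * ∑ a, (g s a - π s a) * M.Qf π s a) := mul_assoc _ _ _

end FinMDP

theorem gradient_domination_general (M : FinMDP) (hM : M.Valid)
    (π : M.S → M.A → ℝ) (hπ : M.IsPolicy π)
    (πstar : M.S → M.A → ℝ) (hstar : M.IsPolicy πstar)
    (μ ρ : M.S → ℝ) (hρ : IsDist ρ) (hμpos : ∀ s, 0 < μ s) :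
    M.Vd πstar ρ - M.Vd π ρ ≤
        (⨆ s, M.dvisitD πstar ρ s / M.dvisitD π μ s) *
          (⨆ pb : {p : M.S → M.A → ℝ // M.IsPolicy p},
            ∑ s, ∑ a, (pb.1 s a - π s a) *
              ((1 / (1 - M.γ)) * M.dvisitD π μ s * M.Qf π s a)) ∧
      M.Vd πstar ρ - M.Vd π ρ ≤
        (1 / (1 - M.γ)) * (⨆ s, M.dvisitD πstar ρ s / μ s) *
          (⨆ pb : {p : M.S → M.A → ℝ // M.IsPolicy p},
            ∑ s, ∑ a, (pb.1 s a - π s a) *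
              ((1 / (1 - M.γ)) * M.dvisitD π μ s * M.Qf π s a)) := by
  have hμ (s : M.S) : 0 ≤ μ s := (hμpos s).le
  have hratio (s : M.S) : M.dvisitD πstar ρ s ≤
      (⨆ s, M.dvisitD πstar ρ s / M.dvisitD π μ s) * M.dvisitD π μ s :=
    (div_le_iff₀ (FinMDP.dvisitD_pos hM hπ hμpos s)).1
      (le_ciSup (Finite.bddAbove_range fun s => M.dvisitD πstar ρ s / M.dvisitD π μ s) s)
  have hfirst := FinMDP.Vd_sub_Vd_le_mul_gradGap hM hπ hstar hμ hρ.1 hratio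
  refine ⟨hfirst, hfirst.trans (mul_le_mul_of_nonneg_right ?_ (FinMDP.gradGap_nonneg hM hπ hμ))⟩
  have hstar_nonneg := FinMDP.dvisitD_nonneg hM hstar hρ.1
  have hγ := sub_nonneg.2 hM.discount_lt_one.le
  refine Real.iSup_le (fun s => ?_)
    (mul_nonneg (by positivity) (Real.iSup_nonneg fun s => div_nonneg (hstar_nonneg s) (hμ s)))
  refine (FinMDP.div_dvisitD_le hM hπ hμpos (hstar_nonneg s) s).trans ?_
  gcongr
  exact le_ciSup (Finite.bddAbove_range fun s => M.dvisitD πstar ρ s / μ s) s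

/-- **Gradient domination for the direct parameterization.** -/
theorem gradient_domination (M : FinMDP) (hM : M.Valid)
    (π : M.S → M.A → ℝ) (hπ : M.IsPolicy π)
    (πstar : M.S → M.A → ℝ) (hstar : M.IsPolicy πstar)
    (hopt : ∀ π' : M.S → M.A → ℝ, M.IsPolicy π' → ∀ s, M.V π' s ≤ M.V πstar s)
    (μ ρ : M.S → ℝ) (hμ : IsDist μ) (hρ : IsDist ρ) (hμpos : ∀ s, 0 < μ s) :
    M.Vd πstar ρ - M.Vd π ρ ≤
        (⨆ s, M.dvisitD πstar ρ s / M.dvisitD π μ s) *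
          (⨆ pb : {p : M.S → M.A → ℝ // M.IsPolicy p},
            ∑ s, ∑ a, (pb.1 s a - π s a) *
              ((1 / (1 - M.γ)) * M.dvisitD π μ s * M.Qf π s a)) ∧
      M.Vd πstar ρ - M.Vd π ρ ≤
        (1 / (1 - M.γ)) * (⨆ s, M.dvisitD πstar ρ s / μ s) *
          (⨆ pb : {p : M.S → M.A → ℝ // M.IsPolicy p},
            ∑ s, ∑ a, (pb.1 s a - π s a) *
              ((1 / (1 - M.γ)) * M.dvisitD π μ s * M.Qf π s a)) :=
  gradient_domination_general M hM π hπ πstar hstar μ ρ hρ hμpos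
end

section
/- (Smoothness of the log-barrier regularized objective) For every finite discounted MDP, state distribution μ, and λ ≥ 0, the log-barrier regularized objective L_λ(θ) = V^{π_θ}(μ) + (λ/(|S||A|)) Σ_{s,a} log π_θ(a|s) on ℝ^{S×A} has β_λ-Lipschitz gradient: ‖∇_θ L_λ(θ) − ∇_θ L_λ(θ′)‖₂ ≤ β_λ ‖θ − θ′‖₂ for all θ, θ′ ∈ ℝ^{S×A}, where β_λ = 8/(1−γ)³ + 2λ/|S|. In particular (λ = 0), θ ↦ V^{π_θ}(μ) has 8/(1−γ)³-Lipschitz gradient. -/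
/-!
Along a line `θ + t v` the softmax policy moves, in every state, with `ℓ¹` speed at most `2 ‖v‖`
and `ℓ¹` acceleration at most `2 ‖v‖²`. The value is `μ ⬝ (1 - γ P_π)⁻¹ r_π`; differentiating the
resolvent twice and using `‖(1 - γ P_π)⁻¹‖_∞ ≤ (1 - γ)⁻¹` bounds its second derivative along the
line by `(6 γ + 2) ‖v‖² / (1 - γ)³ ≤ 8 ‖v‖² / (1 - γ)³`. The barrier `∑ log π_θ(a|s)` has second
derivative `-|A| ∑_s Var_{π_θ(·|s)}(v(s, ·))`, of size at most `|A| ‖v‖²`. By polarization such a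
bound on second directional derivatives bounds the Hessian, and the mean value theorem turns
that into a Lipschitz bound for the gradient.
-/

open scoped BigOperators InnerProductSpace

section Softmax

open Real

variable {ι : Type*} [Fintype ι]

noncomputable def softmax (w : ι → ℝ) (i : ι) : ℝ :=
  exp (w i) / ∑ j, exp (w j)

noncomputable def softmaxMean (w u : ι → ℝ) : ℝ :=
  ∑ i, softmax w i * u i

noncomputable def softmaxVar (w u : ι → ℝ) : ℝ :=
  ∑ i, softmax w i * (u i - softmaxMean w u) ^ 2

noncomputable def softmaxDeriv (w u : ι → ℝ) (i : ι) : ℝ :=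
  softmax w i * (u i - softmaxMean w u)

noncomputable def softmaxDeriv2 (w u : ι → ℝ) (i : ι) : ℝ :=
  softmax w i * ((u i - softmaxMean w u) ^ 2 - softmaxVar w u)

variable [Nonempty ι] (w u : ι → ℝ)

lemma sum_exp_pos : 0 < ∑ j, exp (w j) :=
  Finset.sum_pos (fun _ _ => exp_pos _) Finset.univ_nonempty

lemma softmax_pos (i : ι) : 0 < softmax w i :=
  div_pos (exp_pos _) (sum_exp_pos w)

lemma sum_softmax : ∑ i, softmax w i = 1 := by
  simp only [softmax, ← Finset.sum_div, div_self (sum_exp_pos w).ne']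

lemma softmax_le_one (i : ι) : softmax w i ≤ 1 :=
  (div_le_one (sum_exp_pos w)).2 <|
    Finset.single_le_sum (fun j _ => (exp_pos (w j)).le) (Finset.mem_univ i)

lemma sum_softmax_mul_sub_mean : ∑ i, softmax w i * (u i - softmaxMean w u) = 0 := by
  simp only [mul_sub, Finset.sum_sub_distrib, ← Finset.sum_mul, sum_softmax, one_mul]
  exact sub_self _

lemma sum_softmaxDeriv_mul : ∑ i, softmaxDeriv w u i * u i = softmaxVar w u := by
  have h := sum_softmax_mul_sub_mean w u
  rw [softmaxVar, ← sub_eq_zero, ← Finset.sum_sub_distrib]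
  calc _ = ∑ i, softmax w i * (u i - softmaxMean w u) * softmaxMean w u :=
        Finset.sum_congr rfl fun i _ => by rw [softmaxDeriv]; ring
    _ = 0 := by rw [← Finset.sum_mul, h, zero_mul]

lemma softmaxVar_nonneg : 0 ≤ softmaxVar w u :=
  Finset.sum_nonneg fun i _ => mul_nonneg (softmax_pos w i).le (sq_nonneg _)

lemma softmaxVar_le_sum_sq : softmaxVar w u ≤ ∑ i, u i ^ 2 := by
  have hvar : softmaxVar w u = ∑ i, softmax w i * u i ^ 2 - softmaxMean w u ^ 2 := by
    have hexp : ∀ i, softmax w i * (u i - softmaxMean w u) ^ 2 = softmax w i * u i ^ 2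
        - 2 * softmaxMean w u * (softmax w i * u i) + softmaxMean w u ^ 2 * softmax w i :=
      fun i => by ring
    simp only [softmaxVar, hexp, Finset.sum_add_distrib, Finset.sum_sub_distrib, ← Finset.mul_sum,
      sum_softmax]
    rw [show ∑ i, softmax w i * u i = softmaxMean w u from rfl]
    ring
  rw [hvar]
  calc _ ≤ ∑ i, softmax w i * u i ^ 2 := sub_le_self _ (sq_nonneg _)
    _ ≤ ∑ i, u i ^ 2 := Finset.sum_le_sum fun i _ =>
        mul_le_of_le_one_left (sq_nonneg _) (softmax_le_one w i)

lemma sum_abs_softmaxDeriv_le {B : ℝ} (hu : ∀ i, |u i| ≤ B) :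
    ∑ i, |softmaxDeriv w u i| ≤ 2 * B := by
  have hmean : |softmaxMean w u| ≤ B := by
    calc |softmaxMean w u| ≤ ∑ i, softmax w i * B :=
          (Finset.abs_sum_le_sum_abs _ _).trans <| Finset.sum_le_sum fun i _ => by
            rw [abs_mul, abs_of_pos (softmax_pos w i)]
            exact mul_le_mul_of_nonneg_left (hu i) (softmax_pos w i).le
      _ = B := by rw [← Finset.sum_mul, sum_softmax, one_mul]
  calc ∑ i, |softmaxDeriv w u i| ≤ ∑ i, softmax w i * (2 * B) :=
        Finset.sum_le_sum fun i _ => by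
          rw [softmaxDeriv, abs_mul, abs_of_pos (softmax_pos w i)]
          refine mul_le_mul_of_nonneg_left ?_ (softmax_pos w i).le
          linarith [abs_sub (u i) (softmaxMean w u), hu i]
    _ = 2 * B := by rw [← Finset.sum_mul, sum_softmax, one_mul]

lemma sum_abs_softmaxDeriv2_le : ∑ i, |softmaxDeriv2 w u i| ≤ 2 * softmaxVar w u := by
  calc ∑ i, |softmaxDeriv2 w u i|
      ≤ ∑ i, (softmax w i * (u i - softmaxMean w u) ^ 2 + softmax w i * softmaxVar w u) :=
        Finset.sum_le_sum fun i _ => by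
          rw [softmaxDeriv2, mul_sub]
          refine (abs_sub _ _).trans_eq ?_
          rw [abs_of_nonneg (mul_nonneg (softmax_pos w i).le (sq_nonneg _)),
            abs_of_nonneg (mul_nonneg (softmax_pos w i).le (softmaxVar_nonneg w u))]
    _ = 2 * softmaxVar w u := by
        rw [Finset.sum_add_distrib, ← Finset.sum_mul, sum_softmax, ← softmaxVar]
        ring

lemma hasDerivAt_softmax_line (i : ι) (t : ℝ) :
    HasDerivAt (fun t => softmax (w + t • u) i) (softmaxDeriv (w + t • u) u i) t := by
  have hexp (j : ι) : HasDerivAt (fun t => exp ((w + t • u) j)) (exp ((w + t • u) j) * u j) t := by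
    simpa using ((hasDerivAt_mul_const (u j)).const_add (w j)).exp
  refine ((hexp i).fun_div (HasDerivAt.fun_sum fun j _ => hexp j)
    (sum_exp_pos _).ne').congr_deriv ?_
  have hZ := (sum_exp_pos (w + t • u)).ne'
  simp only [softmaxDeriv, softmaxMean, softmax, div_mul_eq_mul_div, ← Finset.sum_div]
  generalize ∑ j, exp ((w + t • u) j) * u j = N
  generalize ∑ j, exp ((w + t • u) j) = Z at hZ ⊢
  field_simp

lemma hasDerivAt_softmaxMean_line (t : ℝ) :
    HasDerivAt (fun t => softmaxMean (w + t • u) u) (softmaxVar (w + t • u) u) t := by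
  rw [← sum_softmaxDeriv_mul]
  exact HasDerivAt.fun_sum fun i _ => (hasDerivAt_softmax_line w u i t).mul_const (u i)

lemma hasDerivAt_softmaxDeriv_line (i : ι) (t : ℝ) :
    HasDerivAt (fun t => softmaxDeriv (w + t • u) u i) (softmaxDeriv2 (w + t • u) u i) t := by
  refine ((hasDerivAt_softmax_line w u i t).fun_mul
    ((hasDerivAt_softmaxMean_line w u t).const_sub (u i))).congr_deriv ?_
  simp only [softmaxDeriv2, softmaxDeriv]
  ring

lemma hasDerivAt_log_softmax_line (i : ι) (t : ℝ) :
    HasDerivAt (fun t => log (softmax (w + t • u) i)) (u i - softmaxMean (w + t • u) u) t := by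
  refine ((hasDerivAt_softmax_line w u i t).log (softmax_pos _ i).ne').congr_deriv ?_
  rw [softmaxDeriv, mul_div_cancel_left₀ _ (softmax_pos _ i).ne']

lemma contDiff_softmax {n : WithTop ℕ∞} (i : ι) : ContDiff ℝ n fun w : ι → ℝ => softmax w i :=
  ((contDiff_apply ℝ ℝ i).exp).div (ContDiff.sum fun j _ => (contDiff_apply ℝ ℝ j).exp)
    fun w => (sum_exp_pos w).ne'

end Softmax

lemma EuclideanSpace.abs_apply_le_norm {ι : Type*} [Fintype ι] (v : EuclideanSpace ℝ ι) (i : ι) :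
    |v i| ≤ ‖v‖ :=
  PiLp.norm_apply_le v i

lemma EuclideanSpace.sum_sum_sq_eq_norm_sq {σ ι : Type*} [Fintype σ] [Fintype ι]
    (v : EuclideanSpace ℝ (σ × ι)) : ∑ s, ∑ i, v (s, i) ^ 2 = ‖v‖ ^ 2 := by
  simp [EuclideanSpace.norm_sq_eq, Fintype.sum_prod_type]

lemma EuclideanSpace.sum_sq_le_norm_sq {σ ι : Type*} [Fintype σ] [Fintype ι]
    (v : EuclideanSpace ℝ (σ × ι)) (s : σ) : ∑ i, v (s, i) ^ 2 ≤ ‖v‖ ^ 2 := by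
  rw [← EuclideanSpace.sum_sum_sq_eq_norm_sq]
  exact Finset.single_le_sum (f := fun s => ∑ i, v (s, i) ^ 2)
    (fun _ _ => Finset.sum_nonneg fun _ _ => sq_nonneg _) (Finset.mem_univ s)

namespace FinMDP

variable {M : FinMDP} [Nonempty M.A]

lemma isPolicy_softmaxPolicy (θ : EuclideanSpace ℝ (M.S × M.A)) :
    M.IsPolicy (M.softmaxPolicy θ) :=
  ⟨fun s a => (softmax_pos (fun a => θ (s, a)) a).le, fun s => sum_softmax fun a => θ (s, a)⟩

lemma contDiff_softmaxPolicy {n : WithTop ℕ∞} : ContDiff ℝ n M.softmaxPolicy :=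
  contDiff_pi.2 fun s => contDiff_pi.2 fun a => (contDiff_softmax a).comp <|
    contDiff_pi.2 fun a' => (EuclideanSpace.proj (s, a')).contDiff

variable (x v : EuclideanSpace ℝ (M.S × M.A))

lemma hasDerivAt_softmaxPolicy_line (t : ℝ) :
    HasDerivAt (fun t => M.softmaxPolicy (x + t • v))
      (fun s => softmaxDeriv (fun a => (x + t • v) (s, a)) fun a => v (s, a)) t :=
  hasDerivAt_pi.2 fun s => hasDerivAt_pi.2 fun a =>
    hasDerivAt_softmax_line (fun a => x (s, a)) (fun a => v (s, a)) a t

lemma hasDerivAt_softmaxDeriv_policy_line (t : ℝ) :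
    HasDerivAt (fun t s => softmaxDeriv (fun a => (x + t • v) (s, a)) fun a => v (s, a))
      (fun s => softmaxDeriv2 (fun a => (x + t • v) (s, a)) fun a => v (s, a)) t :=
  hasDerivAt_pi.2 fun s => hasDerivAt_pi.2 fun a =>
    hasDerivAt_softmaxDeriv_line (fun a => x (s, a)) (fun a => v (s, a)) a t

end FinMDP

section SecondDerivative

lemma fderiv_fderiv_apply_self_eq_deriv_deriv {E G : Type*} [NormedAddCommGroup E]
    [NormedSpace ℝ E] [NormedAddCommGroup G] [NormedSpace ℝ G] {F : E → G} (hF : ContDiff ℝ 2 F)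
    (x v : E) :
    fderiv ℝ (fderiv ℝ F) x v v = deriv (deriv fun t : ℝ => F (x + t • v)) 0 := by
  have hline (t : ℝ) : HasDerivAt (fun t : ℝ => x + t • v) v t := by
    simpa using ((hasDerivAt_id t).smul_const v).const_add x
  have hF' : ContDiff ℝ 1 (fderiv ℝ F) := hF.fderiv_right (by norm_num)
  have hderiv : deriv (fun t : ℝ => F (x + t • v)) = fun t => fderiv ℝ F (x + t • v) v :=
    funext fun t => ((hF.differentiable (by norm_num) _).hasFDerivAt.comp_hasDerivAt t
      (hline t)).deriv
  have h0 := ((hF'.differentiable one_ne_zero _).hasFDerivAt.comp_hasDerivAt 0 (hline 0)).clm_apply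
    (hasDerivAt_const 0 v)
  simp only [zero_smul, add_zero, map_zero] at h0
  rw [hderiv]
  exact h0.deriv.symm

variable {E : Type*} [NormedAddCommGroup E] [InnerProductSpace ℝ E]

/-- Polarization: `4 B a b = B (a + b) (a + b) - B (a - b) (a - b)`, and the parallelogram law
bounds the right-hand side by `4 β` for unit vectors `a`, `b`. -/
lemma ContinuousLinearMap.norm_le_of_abs_apply_self_le {B : E →L[ℝ] E →L[ℝ] ℝ} {β : ℝ}
    (hβ : 0 ≤ β) (hB : ∀ v w, B v w = B w v) (hle : ∀ v, |B v v| ≤ β * ‖v‖ ^ 2) : ‖B‖ ≤ β := by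
  have hunit : ∀ a b : E, ‖a‖ = 1 → ‖b‖ = 1 → |B a b| ≤ β := by
    intro a b ha hb
    have hpolar : 4 * B a b = B (a + b) (a + b) - B (a - b) (a - b) := by
      simp only [map_add, map_sub, FunLike.coe_add, FunLike.coe_sub,
        Pi.add_apply, Pi.sub_apply, hB b a]
      ring
    have hpar : ‖a + b‖ ^ 2 + ‖a - b‖ ^ 2 = 4 := by
      have := parallelogram_law_with_norm ℝ a b
      rw [ha, hb] at this
      nlinarith
    have : |4 * B a b| ≤ 4 * β := by
      rw [hpolar]
      calc _ ≤ |B (a + b) (a + b)| + |B (a - b) (a - b)| := abs_sub _ _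
        _ ≤ β * ‖a + b‖ ^ 2 + β * ‖a - b‖ ^ 2 := add_le_add (hle _) (hle _)
        _ = 4 * β := by rw [← mul_add, hpar, mul_comm]
    rw [abs_mul, abs_of_pos four_pos] at this
    linarith
  refine ContinuousLinearMap.opNorm_le_bound₂ B hβ fun v w => ?_
  rcases eq_or_ne v 0 with rfl | hv
  · simp
  rcases eq_or_ne w 0 with rfl | hw
  · simp
  have hvw : B v w = ‖v‖ * ‖w‖ * B (‖v‖⁻¹ • v) (‖w‖⁻¹ • w) := by
    simp only [map_smul, FunLike.coe_smul, Pi.smul_apply, smul_eq_mul]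
    field_simp [norm_ne_zero_iff.2 hv, norm_ne_zero_iff.2 hw]
  calc ‖B v w‖ = ‖v‖ * ‖w‖ * |B (‖v‖⁻¹ • v) (‖w‖⁻¹ • w)| := by
        rw [Real.norm_eq_abs, hvw, abs_mul, abs_of_nonneg (by positivity)]
    _ ≤ ‖v‖ * ‖w‖ * β := by
        gcongr
        exact hunit _ _ (norm_smul_inv_norm (𝕜 := ℝ) hv) (norm_smul_inv_norm (𝕜 := ℝ) hw)
    _ = β * ‖v‖ * ‖w‖ := by ring

theorem norm_gradient_sub_le_of_abs_deriv_deriv_le [CompleteSpace E] {F : E → ℝ}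
    (hF : ContDiff ℝ 2 F) {β : ℝ} (hβ : 0 ≤ β)
    (hle : ∀ x v, |deriv (deriv fun t : ℝ => F (x + t • v)) 0| ≤ β * ‖v‖ ^ 2) (x y : E) :
    ‖gradient F x - gradient F y‖ ≤ β * ‖x - y‖ := by
  have hdF : Differentiable ℝ F := hF.differentiable (by norm_num)
  have hdF' : Differentiable ℝ (fderiv ℝ F) :=
    (hF.fderiv_right (m := 1) (by norm_num)).differentiable one_ne_zero
  have hHess (z : E) : ‖fderiv ℝ (fderiv ℝ F) z‖ ≤ β := by
    refine ContinuousLinearMap.norm_le_of_abs_apply_self_le hβ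
      (second_derivative_symmetric (fun y => (hdF y).hasFDerivAt) (hdF' z).hasFDerivAt) fun v => ?_
    rw [fderiv_fderiv_apply_self_eq_deriv_deriv hF]
    exact hle z v
  have hmvt := convex_univ.norm_image_sub_le_of_norm_fderiv_le (fun z _ => hdF' z)
    (fun z _ => hHess z) (Set.mem_univ y) (Set.mem_univ x)
  simpa only [gradient, ← map_sub, LinearIsometryEquiv.norm_map] using hmvt

lemma gradient_add {f g : E → ℝ} {x : E} [CompleteSpace E] (hf : DifferentiableAt ℝ f x)
    (hg : DifferentiableAt ℝ g x) :
    gradient (fun y => f y + g y) x = gradient f x + gradient g x := by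
  simp only [gradient, fderiv_fun_add hf hg, map_add]

end SecondDerivative

section Resolvent

variable {R : Type*} [NormedRing R] [NormedAlgebra ℝ R] {γ : ℝ}

lemma norm_smul_lt_one (hγ₀ : 0 ≤ γ) (hγ₁ : γ < 1) {P : R} (hP : ‖P‖ ≤ 1) : ‖γ • P‖ < 1 := by
  rw [norm_smul, Real.norm_of_nonneg hγ₀]
  nlinarith [norm_nonneg P]

lemma norm_ringInverse_one_sub_smul_le [CompleteSpace R] [NormOneClass R] (hγ₀ : 0 ≤ γ)
    (hγ₁ : γ < 1) {P : R} (hP : ‖P‖ ≤ 1) :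
    ‖Ring.inverse (1 - γ • P)‖ ≤ (1 - γ)⁻¹ := by
  have hlt := norm_smul_lt_one hγ₀ hγ₁ hP
  rw [← geom_series_eq_inverse _ hlt]
  refine (tsum_geometric_le_of_norm_lt_one _ hlt).trans ?_
  have hγP : ‖γ • P‖ ≤ γ := by
    rw [norm_smul, Real.norm_of_nonneg hγ₀]
    exact mul_le_of_le_one_right hγ₀ hP
  rw [norm_one, sub_self, zero_add]
  exact inv_anti₀ (by linarith) (by linarith)

lemma hasDerivAt_ringInverse_one_sub_smul [CompleteSpace R] {P : ℝ → R} {P' : R} {t : ℝ}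
    (hP : HasDerivAt P P' t) (hlt : ‖γ • P t‖ < 1) :
    HasDerivAt (fun u => Ring.inverse (1 - γ • P u))
      (γ • (Ring.inverse (1 - γ • P t) * P' * Ring.inverse (1 - γ • P t))) t := by
  have h := (hasFDerivAt_ringInverse (𝕜 := ℝ) (Units.oneSub _ hlt)).comp_hasDerivAt t
    ((hP.const_smul γ).const_sub 1)
  rw [← Ring.inverse_unit, Units.val_oneSub] at h
  refine h.congr_deriv ?_
  simp

lemma norm_second_deriv_ringInverse_mul_le (hγ₀ : 0 ≤ γ) (hγ₁ : γ < 1)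
    {C P₁ P₂ D D₁ D₂ : R} {a b : ℝ} (hC : ‖C‖ ≤ (1 - γ)⁻¹) (hP₁ : ‖P₁‖ ≤ a) (hP₂ : ‖P₂‖ ≤ b)
    (hD : ‖D‖ ≤ 1) (hD₁ : ‖D₁‖ ≤ a) (hD₂ : ‖D₂‖ ≤ b) :
    ‖γ • (γ • (C * P₁ * C) * P₁ * C + C * P₂ * C + C * P₁ * γ • (C * P₁ * C)) * D
        + γ • (C * P₁ * C) * D₁ + (γ • (C * P₁ * C) * D₁ + C * D₂)‖
      ≤ (2 * γ * a ^ 2 + (1 - γ) * b) / (1 - γ) ^ 3 := by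
  have ha : 0 ≤ a := (norm_nonneg _).trans hP₁
  have hb : 0 ≤ b := (norm_nonneg _).trans hP₂
  have hγ : 0 < 1 - γ := by linarith
  set c := (1 - γ)⁻¹ with hc
  have hc₀ : 0 ≤ c := inv_nonneg.2 hγ.le
  have hC₁ : ‖γ • (C * P₁ * C)‖ ≤ γ * (c * a * c) := by
    rw [norm_smul, Real.norm_of_nonneg hγ₀]
    gcongr
    exact norm_mul₃_le.trans (by gcongr)
  have hC₂ : ‖γ • (γ • (C * P₁ * C) * P₁ * C + C * P₂ * C + C * P₁ * γ • (C * P₁ * C))‖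
      ≤ γ * (γ * (c * a * c) * a * c + c * b * c + c * a * (γ * (c * a * c))) := by
    rw [norm_smul, Real.norm_of_nonneg hγ₀]
    gcongr
    refine (norm_add₃_le).trans (add_le_add (add_le_add ?_ ?_) ?_) <;>
      exact norm_mul₃_le.trans (by gcongr)
  calc _ ≤ γ * (γ * (c * a * c) * a * c + c * b * c + c * a * (γ * (c * a * c))) * 1
        + γ * (c * a * c) * a + (γ * (c * a * c) * a + c * b) := by
        refine (norm_add₃_le).trans (add_le_add (add_le_add ?_ ?_) ((norm_add_le _ _).trans
          (add_le_add ?_ ?_))) <;> exact (norm_mul_le _ _).trans (by gcongr)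
    _ = (2 * γ * a ^ 2 + (1 - γ) * b) / (1 - γ) ^ 3 := by
        rw [hc]
        field_simp
        ring

/-- With `C = (1 - γ P)⁻¹` one has `C' = γ C P' C` and `C'' = γ (C' P' C + C P'' C + C P' C')`. -/
theorem abs_deriv_deriv_clm_ringInverse_mul_le [CompleteSpace R] [NormOneClass R]
    (ℓ : R →L[ℝ] ℝ) (hℓ : ∀ Y, |ℓ Y| ≤ ‖Y‖) (hγ₀ : 0 ≤ γ) (hγ₁ : γ < 1) {P P₁ P₂ D D₁ D₂ : ℝ → R}
    (hP : ∀ t, HasDerivAt P (P₁ t) t) (hP₁ : ∀ t, HasDerivAt P₁ (P₂ t) t)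
    (hD : ∀ t, HasDerivAt D (D₁ t) t) (hD₁ : ∀ t, HasDerivAt D₁ (D₂ t) t)
    (hPle : ∀ t, ‖P t‖ ≤ 1) {t a b : ℝ} (hP₁le : ‖P₁ t‖ ≤ a) (hP₂le : ‖P₂ t‖ ≤ b)
    (hDle : ‖D t‖ ≤ 1) (hD₁le : ‖D₁ t‖ ≤ a) (hD₂le : ‖D₂ t‖ ≤ b) :
    |deriv (deriv fun u => ℓ (Ring.inverse (1 - γ • P u) * D u)) t|
      ≤ (2 * γ * a ^ 2 + (1 - γ) * b) / (1 - γ) ^ 3 := by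
  set C := fun u => Ring.inverse (1 - γ • P u)
  set C₁ := fun u => γ • (C u * P₁ u * C u)
  have hC (u : ℝ) : HasDerivAt C (C₁ u) u :=
    hasDerivAt_ringInverse_one_sub_smul (hP u) (norm_smul_lt_one hγ₀ hγ₁ (hPle u))
  have hC₁ : HasDerivAt C₁ (γ • (C₁ t * P₁ t * C t + C t * P₂ t * C t + C t * P₁ t * C₁ t)) t := by
    refine ((((hC t).mul (hP₁ t)).mul (hC t)).const_smul γ).congr_deriv ?_
    simp only [Pi.mul_apply, add_mul]
  have hX (u : ℝ) : HasDerivAt (fun u => ℓ (C u * D u)) (ℓ (C₁ u * D u + C u * D₁ u)) u :=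
    ℓ.hasFDerivAt.comp_hasDerivAt u ((hC u).fun_mul (hD u))
  have hX₁ : HasDerivAt (fun u => ℓ (C₁ u * D u + C u * D₁ u)) _ t :=
    ℓ.hasFDerivAt.comp_hasDerivAt t ((hC₁.fun_mul (hD t)).fun_add ((hC t).fun_mul (hD₁ t)))
  rw [show deriv (fun u => ℓ (C u * D u)) = _ from funext fun u => (hX u).deriv, hX₁.deriv]
  exact (hℓ _).trans (norm_second_deriv_ringInverse_mul_le hγ₀ hγ₁
    (norm_ringInverse_one_sub_smul_le hγ₀ hγ₁ (hPle t)) hP₁le hP₂le hDle hD₁le hD₂le)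

end Resolvent

section LinftyMatrix

attribute [local instance] Matrix.linftyOpNormedAddCommGroup Matrix.linftyOpNormedRing
  Matrix.linftyOpNormedAlgebra

open Matrix

local instance {n : Type*} [Fintype n] [DecidableEq n] : CompleteSpace (Matrix n n ℝ) :=
  FiniteDimensional.complete ℝ _

variable {m n : Type*} [Fintype m] [Fintype n]

lemma Matrix.linfty_opNorm_le_of_sum_abs_le {A : Matrix m n ℝ} {B : ℝ} (hB : 0 ≤ B)
    (h : ∀ i, ∑ j, |A i j| ≤ B) : ‖A‖ ≤ B := by
  rw [linfty_opNorm_def, ← Real.coe_toNNReal B hB, NNReal.coe_le_coe]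
  refine Finset.sup_le fun i _ => ?_
  rw [← NNReal.coe_le_coe, Real.coe_toNNReal B hB]
  simpa [Real.norm_eq_abs] using h i

noncomputable def Matrix.weightedRowSumCLM (μ : m → ℝ) : Matrix m n ℝ →L[ℝ] ℝ :=
  LinearMap.toContinuousLinearMap
    { toFun := fun Y => μ ⬝ᵥ (Y *ᵥ 1)
      map_add' := fun Y Z => by simp [add_mulVec, dotProduct_add]
      map_smul' := fun c Y => by simp [smul_mulVec] }

lemma Matrix.abs_weightedRowSumCLM_le {μ : m → ℝ} (hμ : IsDist μ) (Y : Matrix m n ℝ) :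
    |weightedRowSumCLM μ Y| ≤ ‖Y‖ := by
  have hrow (i : m) : |(Y *ᵥ 1) i| ≤ ‖Y‖ := by
    refine (norm_le_pi_norm (Y *ᵥ 1) i).trans <| (linfty_opNorm_mulVec Y 1).trans ?_
    exact mul_le_of_le_one_right (norm_nonneg Y) <|
      (pi_norm_le_iff_of_nonneg zero_le_one).2 fun _ => by simp
  calc |μ ⬝ᵥ (Y *ᵥ 1)| ≤ ∑ i, μ i * ‖Y‖ :=
        (Finset.abs_sum_le_sum_abs _ _).trans <| Finset.sum_le_sum fun i _ => by
          rw [abs_mul, abs_of_nonneg (hμ.1 i)]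
          exact mul_le_mul_of_nonneg_left (hrow i) (hμ.1 i)
    _ = ‖Y‖ := by rw [← Finset.sum_mul, hμ.2, one_mul]

namespace FinMDP

variable (M : FinMDP)

noncomputable def PmatCLM : (M.S → M.A → ℝ) →L[ℝ] Matrix M.S M.S ℝ :=
  LinearMap.toContinuousLinearMap
    { toFun := M.Pmat
      map_add' := fun c d => by ext; simp [Pmat, add_mul, Finset.sum_add_distrib]
      map_smul' := fun k c => by ext; simp [Pmat, mul_assoc, Finset.mul_sum] }

noncomputable def rPolDiagonalCLM : (M.S → M.A → ℝ) →L[ℝ] Matrix M.S M.S ℝ :=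
  LinearMap.toContinuousLinearMap
    { toFun := fun c => diagonal (M.rPol c)
      map_add' := fun c d => by
        ext i j
        by_cases h : i = j <;> simp [h, rPol, add_mul, Finset.sum_add_distrib]
      map_smul' := fun k c => by
        ext i j
        by_cases h : i = j <;> simp [h, rPol, mul_assoc, Finset.mul_sum] }

variable {M}

lemma norm_Pmat_le (hM : M.Valid) {c : M.S → M.A → ℝ} {B : ℝ} (hB : 0 ≤ B)
    (hc : ∀ s, ∑ a, |c s a| ≤ B) : ‖M.Pmat c‖ ≤ B := by
  refine linfty_opNorm_le_of_sum_abs_le hB fun s => ?_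
  calc ∑ s', |M.Pmat c s s'| ≤ ∑ s', ∑ a, |c s a| * M.P s a s' :=
        Finset.sum_le_sum fun s' _ => (Finset.abs_sum_le_sum_abs _ _).trans_eq <|
          Finset.sum_congr rfl fun a _ => by rw [abs_mul, abs_of_nonneg (hM.1 s a s')]
    _ = ∑ a, |c s a| := by
        rw [Finset.sum_comm]
        simp only [← Finset.mul_sum, hM.2.1, mul_one]
    _ ≤ B := hc s

lemma norm_diagonal_rPol_le (hM : M.Valid) {c : M.S → M.A → ℝ} {B : ℝ} (hB : 0 ≤ B)
    (hc : ∀ s, ∑ a, |c s a| ≤ B) : ‖diagonal (M.rPol c)‖ ≤ B := by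
  rw [linfty_opNorm_diagonal, pi_norm_le_iff_of_nonneg hB]
  refine fun s => (Finset.abs_sum_le_sum_abs _ _).trans <| le_trans ?_ (hc s)
  refine Finset.sum_le_sum fun a _ => ?_
  rw [abs_mul, abs_of_nonneg (hM.2.2.1 s a).1]
  exact mul_le_of_le_one_right (abs_nonneg _) (hM.2.2.1 s a).2

lemma IsPolicy.sum_abs_le_one {π : M.S → M.A → ℝ} (hπ : M.IsPolicy π) (s : M.S) :
    ∑ a, |π s a| ≤ 1 := by
  simp [abs_of_nonneg (hπ.1 s _), hπ.2 s]

lemma norm_smul_Pmat_lt_one (hM : M.Valid) {π : M.S → M.A → ℝ} (hπ : M.IsPolicy π) :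
    ‖M.γ • M.Pmat π‖ < 1 :=
  norm_smul_lt_one hM.2.2.2.1 hM.2.2.2.2 (norm_Pmat_le hM zero_le_one hπ.sum_abs_le_one)

lemma V_eq_ringInverse_mulVec (hM : M.Valid) {π : M.S → M.A → ℝ} (hπ : M.IsPolicy π) :
    M.V π = Ring.inverse (1 - M.γ • M.Pmat π) *ᵥ M.rPol π := by
  have hsum := hasSum_geom_series_inverse _ (norm_smul_Pmat_lt_one hM hπ)
  funext s
  have h : HasSum (fun n => ∑ s', ((M.γ • M.Pmat π) ^ n) s s' * M.rPol π s')
      ((Ring.inverse (1 - M.γ • M.Pmat π) *ᵥ M.rPol π) s) :=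
    hasSum_sum fun s' _ => (Pi.hasSum.1 (Pi.hasSum.1 hsum s) s').mul_right (M.rPol π s')
  refine HasSum.tsum_eq ?_
  rw [show (fun n => M.γ ^ n * (M.Pmat π ^ n *ᵥ M.rPol π) s)
      = fun n => ∑ s', ((M.γ • M.Pmat π) ^ n) s s' * M.rPol π s' from
    funext fun n => by simp [mulVec, dotProduct, smul_pow, Finset.mul_sum, mul_assoc]]
  exact h

/-- Writing the reward vector as a diagonal matrix keeps the value inside the matrix algebra,
where the calculus of the resolvent `(1 - γ P)⁻¹` applies. -/
lemma Vd_eq_weightedRowSumCLM (hM : M.Valid) {π : M.S → M.A → ℝ} (hπ : M.IsPolicy π)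
    (μ : M.S → ℝ) :
    M.Vd π μ = weightedRowSumCLM μ (Ring.inverse (1 - M.γ • M.Pmat π) * diagonal (M.rPol π)) := by
  change _ = μ ⬝ᵥ (_ *ᵥ 1)
  rw [← mulVec_mulVec, show diagonal (M.rPol π) *ᵥ 1 = M.rPol π from funext fun s => by
    simp [mulVec_diagonal], ← V_eq_ringInverse_mulVec hM hπ]
  rfl

theorem abs_deriv_deriv_Vd_le [Nonempty M.S] (hM : M.Valid) {μ : M.S → ℝ} (hμ : IsDist μ)
    {π π₁ π₂ : ℝ → M.S → M.A → ℝ} (hπ : ∀ t, M.IsPolicy (π t))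
    (hπ₁ : ∀ t, HasDerivAt π (π₁ t) t) (hπ₂ : ∀ t, HasDerivAt π₁ (π₂ t) t) {t a b : ℝ}
    (ha : ∀ s, ∑ x, |π₁ t s x| ≤ a) (hb : ∀ s, ∑ x, |π₂ t s x| ≤ b) :
    |deriv (deriv fun u => M.Vd (π u) μ) t|
      ≤ (2 * M.γ * a ^ 2 + (1 - M.γ) * b) / (1 - M.γ) ^ 3 := by
  have ha₀ : 0 ≤ a := (Finset.sum_nonneg fun _ _ => abs_nonneg _).trans (ha (Classical.arbitrary _))
  have hb₀ : 0 ≤ b := (Finset.sum_nonneg fun _ _ => abs_nonneg _).trans (hb (Classical.arbitrary _))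
  simp_rw [Vd_eq_weightedRowSumCLM hM (hπ _)]
  exact abs_deriv_deriv_clm_ringInverse_mul_le _ (abs_weightedRowSumCLM_le hμ) hM.2.2.2.1
    hM.2.2.2.2 (fun u => M.PmatCLM.hasFDerivAt.comp_hasDerivAt u (hπ₁ u))
    (fun u => M.PmatCLM.hasFDerivAt.comp_hasDerivAt u (hπ₂ u))
    (fun u => M.rPolDiagonalCLM.hasFDerivAt.comp_hasDerivAt u (hπ₁ u))
    (fun u => M.rPolDiagonalCLM.hasFDerivAt.comp_hasDerivAt u (hπ₂ u))
    (fun u => norm_Pmat_le hM zero_le_one (hπ u).sum_abs_le_one) (norm_Pmat_le hM ha₀ ha)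
    (norm_Pmat_le hM hb₀ hb) (norm_diagonal_rPol_le hM zero_le_one (hπ t).sum_abs_le_one)
    (norm_diagonal_rPol_le hM ha₀ ha) (norm_diagonal_rPol_le hM hb₀ hb)

lemma contDiff_Vd_softmaxPolicy [Nonempty M.A] (hM : M.Valid) (μ : M.S → ℝ) {n : WithTop ℕ∞} :
    ContDiff ℝ n fun θ => M.Vd (M.softmaxPolicy θ) μ := by
  simp_rw [Vd_eq_weightedRowSumCLM hM (isPolicy_softmaxPolicy _)]
  have hπ : ContDiff ℝ n M.softmaxPolicy := contDiff_softmaxPolicy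
  refine (weightedRowSumCLM μ).contDiff.comp (ContDiff.mul ?_ (M.rPolDiagonalCLM.contDiff.comp hπ))
  refine contDiff_iff_contDiffAt.2 fun θ => ?_
  exact (contDiffAt_ringInverse ℝ (Units.oneSub _
    (norm_smul_Pmat_lt_one hM (isPolicy_softmaxPolicy θ)))).comp θ
    (contDiffAt_const.sub ((M.PmatCLM.contDiff.comp hπ).const_smul _).contDiffAt)

end FinMDP

end LinftyMatrix

namespace FinMDP

noncomputable def logBarrier (M : FinMDP) (θ : EuclideanSpace ℝ (M.S × M.A)) : ℝ :=
  ∑ s, ∑ a, Real.log (M.softmaxPolicy θ s a)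

variable {M : FinMDP} [Nonempty M.A]

theorem norm_gradient_Vd_softmaxPolicy_sub_le [Nonempty M.S] (hM : M.Valid) {μ : M.S → ℝ}
    (hμ : IsDist μ) (θ θ' : EuclideanSpace ℝ (M.S × M.A)) :
    ‖gradient (fun ϑ => M.Vd (M.softmaxPolicy ϑ) μ) θ
        - gradient (fun ϑ => M.Vd (M.softmaxPolicy ϑ) μ) θ'‖ ≤ 8 / (1 - M.γ) ^ 3 * ‖θ - θ'‖ := by
  have hγ : 0 < 1 - M.γ := sub_pos.2 hM.2.2.2.2
  refine norm_gradient_sub_le_of_abs_deriv_deriv_le (contDiff_Vd_softmaxPolicy hM μ)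
    (by positivity) (fun x v => ?_) θ θ'
  refine (abs_deriv_deriv_Vd_le hM hμ (fun _ => isPolicy_softmaxPolicy _)
    (hasDerivAt_softmaxPolicy_line x v) (hasDerivAt_softmaxDeriv_policy_line x v)
    (a := 2 * ‖v‖) (b := 2 * ‖v‖ ^ 2)
    (fun s => sum_abs_softmaxDeriv_le _ _ fun a => EuclideanSpace.abs_apply_le_norm v (s, a))
    (fun s => (sum_abs_softmaxDeriv2_le _ _).trans <| by
      grw [softmaxVar_le_sum_sq, EuclideanSpace.sum_sq_le_norm_sq v s])).trans ?_
  rw [div_mul_eq_mul_div]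
  gcongr
  nlinarith [sq_nonneg ‖v‖, hM.2.2.2.1]

lemma contDiff_logBarrier {n : WithTop ℕ∞} : ContDiff ℝ n M.logBarrier :=
  ContDiff.sum fun s _ => ContDiff.sum fun a _ =>
    ((contDiff_apply ℝ ℝ a).comp ((contDiff_apply ℝ _ s).comp contDiff_softmaxPolicy)).log
      fun ϑ => (softmax_pos (fun a => ϑ (s, a)) a).ne'

theorem norm_gradient_const_mul_logBarrier_sub_le (c : ℝ) (θ θ' : EuclideanSpace ℝ (M.S × M.A)) :
    ‖gradient (fun ϑ => c * M.logBarrier ϑ) θ - gradient (fun ϑ => c * M.logBarrier ϑ) θ'‖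
      ≤ |c| * Fintype.card M.A * ‖θ - θ'‖ := by
  refine norm_gradient_sub_le_of_abs_deriv_deriv_le (contDiff_const.mul contDiff_logBarrier)
    (by positivity) (fun x v => ?_) θ θ'
  set V := fun s => softmaxVar (fun a => (x + (0 : ℝ) • v) (s, a)) fun a => v (s, a)
  have h₁ (t : ℝ) : HasDerivAt (fun t => c * M.logBarrier (x + t • v))
      (c * ∑ s, ∑ a, (v (s, a) - softmaxMean (fun a => (x + t • v) (s, a)) fun a => v (s, a))) t :=
    (HasDerivAt.fun_sum fun s _ => HasDerivAt.fun_sum fun a _ =>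
      hasDerivAt_log_softmax_line (fun a => x (s, a)) (fun a => v (s, a)) a t).const_mul c
  have h₂ : HasDerivAt
      (fun t : ℝ => c * ∑ s, ∑ a,
        (v (s, a) - softmaxMean (fun a => (x + t • v) (s, a)) fun a => v (s, a)))
      (c * ∑ s, ∑ _a : M.A, (0 - V s)) 0 :=
    (HasDerivAt.fun_sum fun s _ => HasDerivAt.fun_sum fun a _ => (hasDerivAt_const _ _).sub
      (hasDerivAt_softmaxMean_line (fun a => x (s, a)) (fun a => v (s, a)) 0)).const_mul c
  rw [show deriv _ = _ from funext fun t => (h₁ t).deriv, h₂.deriv]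
  have hV : ∑ s, ∑ _a : M.A, (0 - V s) = -(Fintype.card M.A * ∑ s, V s) := by
    simp [Finset.mul_sum]
  rw [hV, abs_mul, abs_neg, abs_of_nonneg (mul_nonneg (Nat.cast_nonneg _)
    (Finset.sum_nonneg fun s _ => softmaxVar_nonneg _ _)), ← mul_assoc]
  gcongr
  calc ∑ s, V s ≤ ∑ s, ∑ a, v (s, a) ^ 2 := Finset.sum_le_sum fun s _ => softmaxVar_le_sum_sq _ _
    _ = ‖v‖ ^ 2 := EuclideanSpace.sum_sum_sq_eq_norm_sq v

end FinMDP

/-- **Smoothness of the log-barrier regularized objective.** -/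
theorem logbarrier_objective_smooth (M : FinMDP) (hM : M.Valid)
    (μ : M.S → ℝ) (hμ : IsDist μ) (lam : ℝ) (hlam : 0 ≤ lam)
    (L : EuclideanSpace ℝ (M.S × M.A) → ℝ)
    (hL : ∀ ϑ, L ϑ = M.Vd (M.softmaxPolicy ϑ) μ +
        lam / ((Fintype.card M.S : ℝ) * (Fintype.card M.A : ℝ)) *
          ∑ s, ∑ a, Real.log (M.softmaxPolicy ϑ s a)) :
    ∀ θ θ' : EuclideanSpace ℝ (M.S × M.A),
      ‖gradient L θ - gradient L θ'‖ ≤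
        (8 / (1 - M.γ) ^ 3 + 2 * lam / (Fintype.card M.S : ℝ)) * ‖θ - θ'‖ := by
  intro θ θ'
  rcases isEmpty_or_nonempty (M.S × M.A) with _ | ⟨⟨s, a⟩⟩
  · simp [show θ = θ' from PiLp.ext fun p => isEmptyElim p]
  have : Nonempty M.S := ⟨s⟩
  have : Nonempty M.A := ⟨a⟩
  set κ := lam / ((Fintype.card M.S : ℝ) * (Fintype.card M.A : ℝ)) with hκ_def
  set F := fun ϑ => M.Vd (M.softmaxPolicy ϑ) μ
  set B := fun ϑ => κ * M.logBarrier ϑ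
  have hF : Differentiable ℝ F := (FinMDP.contDiff_Vd_softmaxPolicy hM μ).differentiable one_ne_zero
  have hB : Differentiable ℝ B :=
    (contDiff_const.mul FinMDP.contDiff_logBarrier).differentiable one_ne_zero
  have hκ : |κ| * Fintype.card M.A ≤ 2 * lam / Fintype.card M.S := by
    rw [abs_of_nonneg (by positivity), hκ_def]
    field_simp
    linarith
  rw [show L = fun ϑ => F ϑ + B ϑ from funext hL, gradient_add (hF θ) (hB θ),
    gradient_add (hF θ') (hB θ'), add_sub_add_comm, add_mul]
  refine (norm_add_le _ _).trans (add_le_add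
    (FinMDP.norm_gradient_Vd_softmaxPolicy_sub_le hM hμ θ θ') ?_)
  exact (FinMDP.norm_gradient_const_mul_logBarrier_sub_le κ θ θ').trans (by gcongr)
end

section
/- (A universal measure achieving relative condition number at most d) Let Φ ⊂ ℝ^d be a nonempty compact set of feature vectors. Then there exists a probability measure ν supported on at most d² points of Φ such that for every probability measure μ supported on Φ and every w ∈ ℝ^d: wᵀ E_{φ∼μ}[φφᵀ] w ≤ d · wᵀ E_{φ∼ν}[φφᵀ] w. In particular, the relative condition number κ = sup_w (wᵀΣ_μ w)/(wᵀΣ_ν w) is at most d. -/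
/-!
Maximise `A ↦ det (A + ε • 1)` over the convex hull `K` of the rank-one matrices `φ φᵀ`,
`φ ∈ Φ`; `K` is compact, and the regularisation `ε > 0` is needed because `K` may consist of
singular matrices. At a maximiser `M` the first variation of `det` along `M → φ φᵀ` gives
`tr ((M + ε • 1)⁻¹ φ φᵀ) ≤ d`, and Cauchy–Schwarz for the inner product of `M + ε • 1` turns this
into `⟪w, φ⟫² ≤ d (wᵀ M w + ε ‖w‖²)`. A limit point of the maximisers as `ε → 0` satisfies the
bound with `ε = 0`, and Carathéodory's theorem in the space of symmetric matrices, of dimension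
`d (d + 1) / 2 < d²` when `d ≥ 2`, writes it as a convex combination of at most `d²` of the
`φ φᵀ`; these points and weights are `ν`. In dimension one `ν` is the Dirac mass at a point of
`Φ` of largest norm. Integrating the pointwise bound against `μ` gives the claim.
-/

open scoped InnerProductSpace
open MeasureTheory Matrix Filter Set Topology Module

section ConvexCombination

variable {𝕜 E : Type*} [Field 𝕜] [LinearOrder 𝕜] [IsStrictOrderedRing 𝕜] [AddCommGroup E]
  [Module 𝕜 E]

theorem exists_fin_sum_eq_of_mem_convexHull {P : Submodule 𝕜 E} [FiniteDimensional 𝕜 P]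
    {s : Set E} (hsP : s ⊆ P) {x : E} (hx : x ∈ convexHull 𝕜 s) :
    ∃ (k : ℕ) (w : Fin k → 𝕜) (z : Fin k → E), k ≤ finrank 𝕜 P + 1 ∧
      w ∈ stdSimplex 𝕜 (Fin k) ∧ (∀ i, z i ∈ s) ∧ ∑ i, w i • z i = x := by
  obtain ⟨ι, _, z, w, hzs, hz, hw, hw1, rfl⟩ := eq_pos_convex_span_of_mem_convexHull hx
  have hspan : vectorSpan 𝕜 (range z) ≤ P := by
    rw [vectorSpan_def, Submodule.span_le]
    rintro _ ⟨a, ha, b, hb, rfl⟩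
    exact P.sub_mem (hsP (hzs ha)) (hsP (hzs hb))
  let e := (Fintype.equivFin ι).symm
  refine ⟨Fintype.card ι, w ∘ e, z ∘ e, ?_, ⟨fun i => (hw _).le, ?_⟩,
    fun i => hzs (mem_range_self _), e.sum_comp fun i => w i • z i⟩
  · exact hz.card_le_finrank_succ.trans (by gcongr; exact Submodule.finrank_mono hspan)
  · rwa [← e.sum_comp w] at hw1

theorem exists_finset_sum_mul_eq_sum_comp {α : Type*} {k : ℕ} (ζ : Fin k → α) {w : Fin k → 𝕜}
    (hw : w ∈ stdSimplex 𝕜 (Fin k)) :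
    ∃ (T : Finset α) (p : α → 𝕜), T.card ≤ k ∧ ↑T ⊆ range ζ ∧ (∀ a, 0 ≤ p a) ∧
      ∑ a ∈ T, p a = 1 ∧ ∀ g : α → 𝕜, ∑ a ∈ T, p a * g a = ∑ i, w i * g (ζ i) := by
  classical
  let p a := ∑ i with ζ i = a, w i
  have hpush (g : α → 𝕜) : ∑ a ∈ Finset.univ.image ζ, p a * g a = ∑ i, w i * g (ζ i) := by
    rw [← Finset.sum_fiberwise_of_maps_to fun i _ =>
      Finset.mem_image_of_mem ζ (Finset.mem_univ i)]
    refine Finset.sum_congr rfl fun a _ => ?_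
    rw [Finset.sum_mul]
    exact Finset.sum_congr rfl fun i hi => by rw [(Finset.mem_filter.1 hi).2]
  refine ⟨Finset.univ.image ζ, p, Finset.card_image_le.trans (by simp), by simp,
    fun a => Finset.sum_nonneg fun i _ => hw.1 i, by simpa [hw.2] using hpush 1, hpush⟩

end ConvexCombination

theorem IsCompact.convexHull {E : Type*} [AddCommGroup E] [Module ℝ E] [TopologicalSpace E]
    [ContinuousAdd E] [ContinuousSMul ℝ E] [FiniteDimensional ℝ E] {s : Set E}
    (hs : IsCompact s) : IsCompact (convexHull ℝ s) := by
  have : _root_.convexHull ℝ s = ⋃ k ∈ Finset.range (finrank ℝ E + 2),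
      (fun p : (Fin k → ℝ) × (Fin k → E) => ∑ i, p.1 i • p.2 i) ''
        (stdSimplex ℝ (Fin k) ×ˢ univ.pi fun _ => s) := by
    refine Subset.antisymm (fun x hx => ?_) ?_
    · obtain ⟨k, w, z, hk, hw, hz, rfl⟩ :=
        exists_fin_sum_eq_of_mem_convexHull (P := ⊤) (by simp) hx
      rw [finrank_top] at hk
      exact mem_biUnion (Finset.mem_range.2 (by omega)) ⟨(w, z), ⟨hw, fun i _ => hz i⟩, rfl⟩
    · simp only [iUnion_subset_iff, image_subset_iff]
      rintro k - ⟨w, z⟩ ⟨hw, hz⟩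
      exact (convex_convexHull ℝ s).sum_mem (fun i _ => hw.1 i) hw.2
        fun i _ => subset_convexHull ℝ s (hz i trivial)
  rw [this]
  exact (Finset.range _).isCompact_biUnion fun k _ =>
    ((isCompact_stdSimplex _ _).prod (isCompact_univ_pi fun _ => hs)).image (by fun_prop)

namespace Matrix

variable {n : Type*} [Fintype n]

theorem dotProduct_vecMulVec_self_mulVec {R : Type*} [CommRing R] (w x : n → R) :
    w ⬝ᵥ vecMulVec x x *ᵥ w = (w ⬝ᵥ x) ^ 2 := by
  simp [vecMulVec_mulVec, dotProduct_comm x, sq]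

variable [DecidableEq n]

theorem trace_inv_mul_nonpos_of_det_add_smul_le {B D : Matrix n n ℝ} (hB : 0 < B.det)
    (h : ∀ᶠ θ in 𝓝[>] (0 : ℝ), (B + θ • D).det ≤ B.det) : (B⁻¹ * D).trace ≤ 0 := by
  set C := B⁻¹ * D
  set E := (det (1 + (Polynomial.X : Polynomial ℝ) • C.map Polynomial.C)).divX.divX
  have hexpand (θ : ℝ) : (B + θ • D).det = B.det * (1 + C.trace * θ + E.eval θ * θ ^ 2) := by
    have : B + θ • D = B * (1 + θ • C) := by
      rw [mul_add, mul_one, mul_smul_comm, ← mul_assoc, mul_nonsing_inv _ hB.ne'.isUnit, one_mul]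
    rw [this, det_mul, det_one_add_smul]
  have hlim : Tendsto (fun θ : ℝ => C.trace + E.eval θ * θ) (𝓝[>] 0) (𝓝 C.trace) := by
    have : Continuous (fun θ : ℝ => C.trace + E.eval θ * θ) := by fun_prop
    simpa using (this.tendsto 0).mono_left nhdsWithin_le_nhds
  refine le_of_tendsto hlim ?_
  filter_upwards [h, self_mem_nhdsWithin] with θ hθ (hθpos : 0 < θ)
  rw [hexpand] at hθ
  nlinarith [mul_le_mul_iff_right₀ hB |>.mp (hθ.trans_eq (mul_one _).symm)]

theorem trace_inv_mul_le_card_of_isMaxOn_det {K : Set (Matrix n n ℝ)} (hK : Convex ℝ K)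
    {M : Matrix n n ℝ} (hM : M ∈ K) (hMpsd : M.PosSemidef) {ε : ℝ} (hε : 0 < ε)
    (hmax : IsMaxOn (fun A => (A + ε • 1).det) K M) {A : Matrix n n ℝ} (hA : A ∈ K) :
    ((M + ε • 1)⁻¹ * A).trace ≤ Fintype.card n := by
  set B := M + ε • (1 : Matrix n n ℝ)
  have hB : B.PosDef := PosDef.posSemidef_add hMpsd (PosDef.one.smul hε)
  have hdir : (B⁻¹ * (A - M)).trace ≤ 0 := by
    refine trace_inv_mul_nonpos_of_det_add_smul_le hB.det_pos ?_
    filter_upwards [Ioc_mem_nhdsGT zero_lt_one] with θ hθ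
    have hmem : M + θ • (A - M) ∈ K := hK.add_smul_sub_mem hM hA ⟨hθ.1.le, hθ.2⟩
    rw [add_right_comm]
    exact isMaxOn_iff.mp hmax _ hmem
  have hBM : (B⁻¹ * M).trace = Fintype.card n - ε * B⁻¹.trace := by
    have : M = B - ε • 1 := by simp [B]
    rw [this, mul_sub, nonsing_inv_mul _ hB.det_pos.ne'.isUnit, mul_smul_comm, mul_one,
      trace_sub, trace_one, trace_smul, smul_eq_mul]
  have htr := hB.inv.posSemidef.trace_nonneg
  rw [mul_sub, trace_sub, hBM] at hdir
  nlinarith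

theorem PosDef.sq_dotProduct_le {B : Matrix n n ℝ} (hB : B.PosDef) (w x : n → ℝ) :
    (w ⬝ᵥ x) ^ 2 ≤ (w ⬝ᵥ B *ᵥ w) * (x ⬝ᵥ B⁻¹ *ᵥ x) := by
  let _ := B.toSeminormedAddCommGroup hB.posSemidef
  let _ := B.toInnerProductSpace hB.posSemidef
  have hinner (a b : n → ℝ) : ⟪a, b⟫_ℝ = a ⬝ᵥ B *ᵥ b := by
    change (B *ᵥ b) ⬝ᵥ star a = _
    rw [star_trivial, dotProduct_comm]
  have hBB : B *ᵥ B⁻¹ *ᵥ x = x := by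
    rw [mulVec_mulVec, mul_nonsing_inv _ hB.det_pos.ne'.isUnit, one_mulVec]
  have := real_inner_mul_inner_self_le w (B⁻¹ *ᵥ x)
  rw [hinner, hinner, hinner, hBB, dotProduct_comm (B⁻¹ *ᵥ x) x] at this
  simpa [sq] using this

theorem sq_dotProduct_le_of_isMaxOn_det {K : Set (Matrix n n ℝ)} (hK : Convex ℝ K)
    {M : Matrix n n ℝ} (hM : M ∈ K) (hMpsd : M.PosSemidef) {ε : ℝ} (hε : 0 < ε)
    (hmax : IsMaxOn (fun A => (A + ε • 1).det) K M) {x : n → ℝ} (hx : vecMulVec x x ∈ K)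
    (w : n → ℝ) : (w ⬝ᵥ x) ^ 2 ≤ Fintype.card n * (w ⬝ᵥ M *ᵥ w + ε * (w ⬝ᵥ w)) := by
  set B := M + ε • (1 : Matrix n n ℝ)
  have hB : B.PosDef := PosDef.posSemidef_add hMpsd (PosDef.one.smul hε)
  have hx' : x ⬝ᵥ B⁻¹ *ᵥ x ≤ Fintype.card n := by
    rw [dotProduct_comm, ← trace_vecMulVec, ← mul_vecMulVec]
    exact trace_inv_mul_le_card_of_isMaxOn_det hK hM hMpsd hε hmax hx
  have hw : w ⬝ᵥ B *ᵥ w = w ⬝ᵥ M *ᵥ w + ε * (w ⬝ᵥ w) := by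
    simp [B, add_mulVec, smul_mulVec]
  have hBw : 0 ≤ w ⬝ᵥ B *ᵥ w := by simpa using hB.posSemidef.dotProduct_mulVec_nonneg w
  calc (w ⬝ᵥ x) ^ 2 ≤ (w ⬝ᵥ B *ᵥ w) * (x ⬝ᵥ B⁻¹ *ᵥ x) := hB.sq_dotProduct_le w x
    _ ≤ (w ⬝ᵥ B *ᵥ w) * Fintype.card n := by gcongr
    _ = _ := by rw [hw, mul_comm]

theorem exists_mem_forall_sq_dotProduct_le {K : Set (Matrix n n ℝ)} (hK : IsCompact K)
    (hKc : Convex ℝ K) (hKne : K.Nonempty) (hKpsd : ∀ A ∈ K, A.PosSemidef) :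
    ∃ M ∈ K, ∀ x, vecMulVec x x ∈ K → ∀ w,
      (w ⬝ᵥ x) ^ 2 ≤ Fintype.card n * (w ⬝ᵥ M *ᵥ w) := by
  have hmax (k : ℕ) : ∃ M ∈ K, IsMaxOn (fun A => (A + (1 / (k + 1 : ℝ)) • 1).det) K M :=
    hK.exists_isMaxOn hKne (by fun_prop)
  choose M hMK hMmax using hmax
  have : FirstCountableTopology (Matrix n n ℝ) :=
    inferInstanceAs (FirstCountableTopology (n → n → ℝ))
  obtain ⟨M₀, hM₀, φ, hφ, hlim⟩ := hK.tendsto_subseq hMK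
  refine ⟨M₀, hM₀, fun x hx w => ge_of_tendsto' (x := atTop) ?_ fun k =>
    sq_dotProduct_le_of_isMaxOn_det hKc (hMK (φ k)) (hKpsd _ (hMK _)) (by positivity)
      (hMmax (φ k)) hx w⟩
  have hε : Tendsto (fun k => 1 / ((φ k : ℕ) + 1 : ℝ)) atTop (𝓝 0) :=
    tendsto_one_div_add_atTop_nhds_zero_nat.comp hφ.tendsto_atTop
  have hq : Continuous fun A : Matrix n n ℝ => w ⬝ᵥ A *ᵥ w := by fun_prop
  simpa using (((hq.tendsto M₀).comp hlim).add (hε.mul_const (w ⬝ᵥ w))).const_mul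
    (Fintype.card n : ℝ)

theorem finrank_selfAdjoint_lt [Nontrivial n] :
    finrank ℝ (selfAdjoint.submodule ℝ (Matrix n n ℝ)) < Fintype.card n ^ 2 := by
  obtain ⟨i, j, hij⟩ := exists_pair_ne n
  have hne : selfAdjoint.submodule ℝ (Matrix n n ℝ) ≠ ⊤ := fun h => by
    have : single i j (1 : ℝ) ∈ selfAdjoint.submodule ℝ _ := h ▸ Submodule.mem_top
    simpa [hij] using congr_fun₂ this j i
  simpa [sq, finrank_matrix] using Submodule.finrank_lt hne

end Matrix

theorem integral_le_of_forall_mem_le {α : Type*} [MeasurableSpace α] {μ : Measure α}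
    [IsProbabilityMeasure μ] {s : Set α} (hs : μ sᶜ = 0) {f : α → ℝ} (hf : 0 ≤ f) {C : ℝ}
    (hC : ∀ x ∈ s, f x ≤ C) : ∫ x, f x ∂μ ≤ C := by
  have hae : ∀ᵐ x ∂μ, f x ≤ C := by
    filter_upwards [mem_ae_iff.2 hs] with x hx using hC x hx
  simpa using integral_mono_of_nonneg (ae_of_all _ hf) (integrable_const C) hae

theorem exists_forall_sq_inner_le_of_unique {n : Type*} [Fintype n] [Unique n]
    {Φ : Set (EuclideanSpace ℝ n)} (hne : Φ.Nonempty) (hΦ : IsCompact Φ) :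
    ∃ x₀ ∈ Φ, ∀ x ∈ Φ, ∀ w : EuclideanSpace ℝ n, ⟪w, x⟫_ℝ ^ 2 ≤ ⟪w, x₀⟫_ℝ ^ 2 := by
  have hinner (w x : EuclideanSpace ℝ n) : ⟪w, x⟫_ℝ = w default * x default := by
    simp [EuclideanSpace.inner_eq_star_dotProduct, dotProduct, mul_comm]
  obtain ⟨x₀, hx₀, hmax⟩ := hΦ.exists_isMaxOn hne (f := fun x => x default ^ 2) (by fun_prop)
  refine ⟨x₀, hx₀, fun x hx w => ?_⟩
  rw [hinner, hinner, mul_pow, mul_pow]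
  exact mul_le_mul_of_nonneg_left (isMaxOn_iff.1 hmax x hx) (sq_nonneg _)

theorem exists_finset_sq_inner_le_of_nontrivial {n : Type*} [Fintype n] [DecidableEq n]
    [Nontrivial n] {Φ : Set (EuclideanSpace ℝ n)} (hne : Φ.Nonempty) (hΦ : IsCompact Φ) :
    ∃ (T : Finset (EuclideanSpace ℝ n)) (p : EuclideanSpace ℝ n → ℝ),
      T.card ≤ Fintype.card n ^ 2 ∧ ↑T ⊆ Φ ∧ (∀ x, 0 ≤ p x) ∧ ∑ x ∈ T, p x = 1 ∧
      ∀ x ∈ Φ, ∀ w, ⟪w, x⟫_ℝ ^ 2 ≤ Fintype.card n * ∑ y ∈ T, p y * ⟪w, y⟫_ℝ ^ 2 := by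
  let f (x : EuclideanSpace ℝ n) : Matrix n n ℝ := vecMulVec x.ofLp x.ofLp
  have hf (x : EuclideanSpace ℝ n) : (f x).PosSemidef := by
    simpa using posSemidef_vecMulVec_self_star x.ofLp
  have hpsd : convexHull ℝ (f '' Φ) ⊆ {A | A.PosSemidef} :=
    convexHull_min (image_subset_iff.2 fun x _ => hf x)
      fun A hA B hB a b ha hb _ => (hA.smul ha).add (hB.smul hb)
  obtain ⟨M, hMK, hM⟩ := exists_mem_forall_sq_dotProduct_le (hΦ.image (by fun_prop)).convexHull
    (convex_convexHull ℝ _) ((hne.image f).mono (subset_convexHull ℝ _)) fun A hA => hpsd hA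
  obtain ⟨k, ν, z, hk, hν, hz, rfl⟩ := exists_fin_sum_eq_of_mem_convexHull
    (P := selfAdjoint.submodule ℝ (Matrix n n ℝ)) (image_subset_iff.2 fun x _ => (hf x).1) hMK
  choose ζ hζΦ hζ using hz
  obtain ⟨T, p, hT, hTζ, hp, hsum, hpush⟩ := exists_finset_sum_mul_eq_sum_comp ζ hν
  have hinner (w x : EuclideanSpace ℝ n) : ⟪w, x⟫_ℝ = w.ofLp ⬝ᵥ x.ofLp := by
    simp [EuclideanSpace.inner_eq_star_dotProduct, dotProduct_comm]
  refine ⟨T, p, hT.trans (by have := finrank_selfAdjoint_lt (n := n); omega),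
    hTζ.trans (range_subset_iff.2 hζΦ), hp, hsum, fun x hx w => ?_⟩
  have := hM x.ofLp (subset_convexHull ℝ _ ⟨x, hx, rfl⟩) w.ofLp
  simp_rw [hinner, hpush fun y => (w.ofLp ⬝ᵥ y.ofLp) ^ 2]
  simpa [sum_mulVec, dotProduct_sum, ← hζ, f, smul_mulVec, dotProduct_vecMulVec_self_mulVec]
    using this

theorem exists_finset_sq_inner_le {n : Type*} [Fintype n] [DecidableEq n] [Nonempty n]
    {Φ : Set (EuclideanSpace ℝ n)} (hne : Φ.Nonempty) (hΦ : IsCompact Φ) :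
    ∃ (T : Finset (EuclideanSpace ℝ n)) (p : EuclideanSpace ℝ n → ℝ),
      T.card ≤ Fintype.card n ^ 2 ∧ ↑T ⊆ Φ ∧ (∀ x, 0 ≤ p x) ∧ ∑ x ∈ T, p x = 1 ∧
      ∀ x ∈ Φ, ∀ w, ⟪w, x⟫_ℝ ^ 2 ≤ Fintype.card n * ∑ y ∈ T, p y * ⟪w, y⟫_ℝ ^ 2 := by
  cases subsingleton_or_nontrivial n
  · have : Unique n := uniqueOfSubsingleton (Classical.arbitrary n)
    obtain ⟨x₀, hx₀, hdom⟩ := exists_forall_sq_inner_le_of_unique hne hΦ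
    exact ⟨{x₀}, fun _ => 1, by simp, by simpa, fun _ => zero_le_one, by simp,
      by simpa using hdom⟩
  · exact exists_finset_sq_inner_le_of_nontrivial hne hΦ

/-- **A universal measure achieving relative condition number at most `d`.**
For a nonempty compact set `Φ ⊂ ℝ^d` of feature vectors, there is a probability
measure `ν` supported on at most `d²` points of `Φ` (given by the finite support `T`
and weights `p`) such that for every probability measure `μ` supported on `Φ` and
every `w ∈ ℝ^d`, `wᵀ Σ_μ w ≤ d · wᵀ Σ_ν w`, where `Σ_υ = E_{φ∼υ}[φ φᵀ]`, i.e.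
`wᵀ Σ_υ w = E_{φ∼υ}[⟪w, φ⟫²]`. -/
theorem universal_measure_condition_number (d : ℕ) (hd : 0 < d)
    (Φ : Set (EuclideanSpace ℝ (Fin d))) (hne : Φ.Nonempty) (hΦ : IsCompact Φ) :
    ∃ (T : Finset (EuclideanSpace ℝ (Fin d))) (p : EuclideanSpace ℝ (Fin d) → ℝ),
      T.card ≤ d ^ 2 ∧ ↑T ⊆ Φ ∧ (∀ x, 0 ≤ p x) ∧ (∑ x ∈ T, p x = 1) ∧
      ∀ μ : Measure (EuclideanSpace ℝ (Fin d)), IsProbabilityMeasure μ → μ Φᶜ = 0 →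
        ∀ w : EuclideanSpace ℝ (Fin d),
          ∫ x, ⟪w, x⟫_ℝ ^ 2 ∂μ ≤ (d : ℝ) * ∑ x ∈ T, p x * ⟪w, x⟫_ℝ ^ 2 := by
  have : Nonempty (Fin d) := Fin.pos_iff_nonempty.1 hd
  obtain ⟨T, p, hcard, hTΦ, hp, hsum, hdom⟩ := exists_finset_sq_inner_le hne hΦ
  rw [Fintype.card_fin] at hcard hdom
  exact ⟨T, p, hcard, hTΦ, hp, hsum, fun μ _ hμ w =>
    integral_le_of_forall_mem_le hμ (fun x => sq_nonneg _) fun x hx => hdom x hx w⟩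
end
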